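/- arXiv:2207.02036 — 3 statements merged into one kernel-verified Lean document; each statement's English description precedes it below -/
import Mathlib

section
/- Let (Z_i)_{i≥1} be an i.i.d. sequence of random variables taking values in {0,1}, with common mean μ = E[Z_1]. Let μ̂^(n) = (1/n)·∑_{i=1}^n Z_i, and let J be a stopping time with respect to the natural filtration of (Z_i) with P[J < ∞] = 1. Fix δ ∈ (0,1], a tolerance level τ ∈ [0,1], and define ε(δ, n) = √((0.6·log(log_{1.1} n + 1) + (1/1.8)·log(24/δ))/n). Then the probability of wrongly certifying is at most δ: P[ μ̂^(J) + τ − ε(δ, J) − 1 ≥ 0 and μ < 1 − τ ] ≤ δ. -/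
open MeasureTheory ProbabilityTheory
open scoped ENNReal NNReal

/-- The running empirical mean `μ̂^(n) = (1/n) ∑_{i=1}^n Z_i` (indices shifted so that
`Z 0, …, Z (n-1)` play the role of `Z_1, …, Z_n`). -/
noncomputable def empMean {Ω : Type*} (Z : ℕ → Ω → ℝ) (n : ℕ) (ω : Ω) : ℝ :=
  (∑ i ∈ Finset.range n, Z i ω) / n

/-- The PRoA adaptive error width
`ε(δ, n) = √((0.6·log(log_{1.1} n + 1) + (1/1.8)·log(24/δ))/n)`. -/
noncomputable def adaptiveEps (δ : ℝ) (n : ℕ) : ℝ :=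
  Real.sqrt ((0.6 * Real.log (Real.log n / Real.log 1.1 + 1)
    + (1 / 1.8) * Real.log (24 / δ)) / n)

lemma aux_D_pos {p : ℝ} (hp0 : 0 ≤ p) (hp1 : p ≤ 1) (x : ℝ) :
    0 < 1 - p + p * Real.exp x := by
  rcases lt_or_eq_of_le hp1 with h | h
  · nlinarith [Real.exp_pos x, mul_nonneg hp0 (Real.exp_pos x).le]
  · subst h; simpa using Real.exp_pos x

lemma hoeffding_bernoulli {p : ℝ} (hp0 : 0 ≤ p) (hp1 : p ≤ 1) {x : ℝ} (hx : 0 ≤ x) :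
    1 - p + p * Real.exp x ≤ Real.exp (p * x + x ^ 2 / 8) := by
  have hD : ∀ y : ℝ, 0 < 1 - p + p * Real.exp y := aux_D_pos hp0 hp1
  set D : ℝ → ℝ := fun y => 1 - p + p * Real.exp y with hDdef
  set h1 : ℝ → ℝ := fun y => p + y / 4 - p * Real.exp y / D y with hh1
  set h : ℝ → ℝ := fun y => p * y + y ^ 2 / 8 - Real.log (D y) with hh
  have hDder : ∀ y, HasDerivAt D (p * Real.exp y) y := by
    intro y
    exact ((Real.hasDerivAt_exp y).const_mul p).const_add (1 - p)
  have hder : ∀ y, HasDerivAt h (h1 y) y := by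
    intro y
    have hlog : HasDerivAt (fun z => Real.log (D z)) (p * Real.exp y / D y) y :=
      (hDder y).log (hD y).ne'
    have hpoly : HasDerivAt (fun z : ℝ => p * z + z ^ 2 / 8) (p + y / 4) y := by
      have := ((hasDerivAt_id y).const_mul p).add ((hasDerivAt_pow 2 y).div_const 8)
      exact this.congr_deriv (by norm_num; ring)
    exact hpoly.sub hlog
  have hder1 : ∀ y, HasDerivAt h1
      (1 / 4 - (p * Real.exp y * D y - p * Real.exp y * (p * Real.exp y)) / D y ^ 2) y := by
    intro y
    have hdiv : HasDerivAt (fun z => p * Real.exp z / D z)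
        ((p * Real.exp y * D y - p * Real.exp y * (p * Real.exp y)) / D y ^ 2) y :=
      ((Real.hasDerivAt_exp y).const_mul p).div (hDder y) (hD y).ne'
    have := ((hasDerivAt_const y p).add ((hasDerivAt_id y).div_const 4)).sub hdiv
    exact this.congr_deriv (by ring)
  have hder1nonneg : ∀ y, 0 ≤ 1 / 4 -
      (p * Real.exp y * D y - p * Real.exp y * (p * Real.exp y)) / D y ^ 2 := by
    intro y
    have hE0 : 0 ≤ p * Real.exp y := mul_nonneg hp0 (Real.exp_pos y).le
    have hED : p * Real.exp y ≤ D y := by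
      simp only [hDdef]; linarith
    have hkey : (p * Real.exp y * D y - p * Real.exp y * (p * Real.exp y)) / D y ^ 2 ≤ 1 / 4 := by
      have hDy : D y = 1 - p + p * Real.exp y := rfl
      rw [hDy] at hED ⊢
      rw [div_le_iff₀ (pow_pos (hD y) 2)]
      nlinarith [sq_nonneg (1 - p + p * Real.exp y - 2 * (p * Real.exp y)), hE0, hED, hD y]
    linarith
  have hmono1 : Monotone h1 :=
    monotone_of_deriv_nonneg (fun y => (hder1 y).differentiableAt) (fun y => by
      rw [(hder1 y).deriv]; exact hder1nonneg y)
  have h1zero : h1 0 = 0 := by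
    simp [hh1, hDdef, Real.exp_zero]
  have h1nonneg : ∀ y, 0 ≤ y → 0 ≤ h1 y := fun y hy => h1zero ▸ hmono1 hy
  have hmono : MonotoneOn h (Set.Ici 0) := by
    refine monotoneOn_of_deriv_nonneg (convex_Ici 0) ?_ ?_ ?_
    · exact Continuous.continuousOn (by
        have : ∀ y, DifferentiableAt ℝ h y := fun y => (hder y).differentiableAt
        exact Differentiable.continuous this)
    · exact fun y _ => ((hder y).differentiableAt).differentiableWithinAt
    · intro y hy
      rw [(hder y).deriv]
      exact h1nonneg y (le_of_lt (by simpa using hy))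
  have hzero : h 0 = 0 := by
    simp [hh, hDdef]
  have hfin : 0 ≤ h x := by
    have := hmono (Set.self_mem_Ici) (by exact hx) hx
    rwa [hzero] at this
  have hlog : Real.log (D x) ≤ p * x + x ^ 2 / 8 := by
    simp only [hh] at hfin; linarith
  calc D x ≤ Real.exp (Real.log (D x)) := by rw [Real.exp_log (hD x)]
    _ ≤ Real.exp (p * x + x ^ 2 / 8) := Real.exp_le_exp.2 hlog


lemma integrable_of_bdd {Ω : Type*} [MeasurableSpace Ω] {P : Measure Ω} [IsProbabilityMeasure P]
    {f : Ω → ℝ} (hf : StronglyMeasurable f) {C : ℝ} (h : ∀ ω, |f ω| ≤ C) :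
    Integrable f P :=
  Integrable.mono' (integrable_const C) hf.aestronglyMeasurable (Filter.Eventually.of_forall h)

lemma exp_mart {Ω : Type*} [MeasurableSpace Ω] (P : Measure Ω) [IsProbabilityMeasure P]
    (Z : ℕ → Ω → ℝ) (hmeas : ∀ i, StronglyMeasurable (Z i))
    (hindep : iIndepFun Z P)
    (hident : ∀ i, IdentDistrib (Z i) (Z 0) P P)
    (hval : ∀ i ω, Z i ω = 0 ∨ Z i ω = 1)
    (μ : ℝ) (hμ : μ = ∫ ω, Z 0 ω ∂P) (l : ℝ) (hl : 0 ≤ l) :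
    Submartingale (fun n ω =>
        Real.exp (l * ((∑ i ∈ Finset.range (n+1), Z i ω) - (n+1) * μ)))
      (Filtration.natural Z hmeas) P ∧
    ∀ n : ℕ, ∫ ω, Real.exp (l * ((∑ i ∈ Finset.range (n+1), Z i ω) - (n+1) * μ)) ∂P ≤
      Real.exp ((n+1) * l^2 / 8) := by
  set 𝒢 := Filtration.natural Z hmeas with h𝒢
  set F : ℕ → Ω → ℝ := fun n ω =>
    Real.exp (l * ((∑ i ∈ Finset.range (n+1), Z i ω) - (n+1) * μ)) with hF
  set g : ℕ → Ω → ℝ := fun i ω => Real.exp (l * (Z i ω - μ)) with hg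
  set G : ℝ := Real.exp (-(l*μ)) * (1 - μ + μ * Real.exp l) with hG
  -- basic facts
  have hZ01 : ∀ i ω, 0 ≤ Z i ω ∧ Z i ω ≤ 1 := by
    intro i ω; rcases hval i ω with h | h <;> rw [h] <;> norm_num
  have hZint : ∀ i, Integrable (Z i) P := by
    intro i
    exact integrable_of_bdd (hmeas i) (C := 1) (fun ω => by
      rcases hval i ω with h | h <;> rw [h] <;> norm_num)
  have hμi : ∀ i, ∫ ω, Z i ω ∂P = μ := by
    intro i; rw [hμ]; exact (hident i).integral_eq
  have hμ0 : 0 ≤ μ := by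
    rw [hμ]; exact integral_nonneg (fun ω => (hZ01 0 ω).1)
  have hμ1 : μ ≤ 1 := by
    rw [hμ]
    calc ∫ ω, Z 0 ω ∂P ≤ ∫ _, (1:ℝ) ∂P :=
          integral_mono (hZint 0) (integrable_const 1) (fun ω => (hZ01 0 ω).2)
      _ = 1 := by simp
  have hg_eq : ∀ i, g i = fun ω => Real.exp (-(l*μ)) * (1 + (Real.exp l - 1) * Z i ω) := by
    intro i; funext ω
    rcases hval i ω with h | h <;> simp only [hg, h]
    · rw [mul_zero, add_zero, mul_one]; congr 1; ring
    · rw [mul_one, show 1 + (Real.exp l - 1) = Real.exp l by ring, ← Real.exp_add]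
      congr 1; ring
  have hgint : ∀ i, Integrable (g i) P := by
    intro i; rw [hg_eq i]
    exact ((integrable_const (1:ℝ)).add ((hZint i).const_mul _)).const_mul _
  have hgG : ∀ i, ∫ ω, g i ω ∂P = G := by
    intro i
    rw [hg_eq i]
    rw [integral_const_mul]
    rw [integral_add (integrable_const 1) ((hZint i).const_mul _)]
    rw [integral_const_mul, hμi i]
    simp [hG]; ring
  have hG1 : 1 ≤ G := by
    have hcx := convexOn_exp.2 (Set.mem_univ (0:ℝ)) (Set.mem_univ l)
      (by linarith : (0:ℝ) ≤ 1 - μ) hμ0 (by ring)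
    simp only [smul_eq_mul, mul_zero, zero_add, Real.exp_zero, mul_one] at hcx
    have : Real.exp (μ * l) ≤ 1 - μ + μ * Real.exp l := by linarith
    rw [hG]
    calc (1:ℝ) = Real.exp (-(l*μ)) * Real.exp (μ * l) := by
          rw [← Real.exp_add]; ring_nf; exact Real.exp_zero.symm
      _ ≤ Real.exp (-(l*μ)) * (1 - μ + μ * Real.exp l) := by
          exact mul_le_mul_of_nonneg_left this (Real.exp_nonneg _)
  have hGle : G ≤ Real.exp (l^2/8) := by
    have := hoeffding_bernoulli hμ0 hμ1 hl
    rw [hG]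
    calc Real.exp (-(l*μ)) * (1 - μ + μ * Real.exp l)
        ≤ Real.exp (-(l*μ)) * Real.exp (μ * l + l ^ 2 / 8) :=
          mul_le_mul_of_nonneg_left this (Real.exp_nonneg _)
      _ = Real.exp (l^2/8) := by rw [← Real.exp_add]; ring_nf
  have hFsucc : ∀ n, F (n+1) = F n * g (n+1) := by
    intro n; funext ω
    simp only [hF, hg, Pi.mul_apply, ← Real.exp_add, Finset.sum_range_succ]
    congr 1
    push_cast
    ring
  have hFSM : ∀ n, StronglyMeasurable[𝒢 n] (F n) := by
    intro n
    have hsum : StronglyMeasurable[𝒢 n] (fun ω => ∑ i ∈ Finset.range (n+1), Z i ω) := by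
      apply Finset.stronglyMeasurable_fun_sum
      intro i hi
      have : i ≤ n := Nat.lt_succ_iff.mp (Finset.mem_range.mp hi)
      exact (Filtration.stronglyAdapted_natural hmeas i).mono (𝒢.mono this)
    exact Real.continuous_exp.comp_stronglyMeasurable
      ((hsum.sub stronglyMeasurable_const).const_mul l)
  have hFbd : ∀ n ω, |F n ω| ≤ Real.exp (l * ((n+1) * (1 + |μ|))) := by
    intro n ω
    have hS0 : 0 ≤ ∑ i ∈ Finset.range (n+1), Z i ω :=
      Finset.sum_nonneg (fun i _ => (hZ01 i ω).1)
    have hS1 : ∑ i ∈ Finset.range (n+1), Z i ω ≤ (n+1 : ℝ) := by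
      calc ∑ i ∈ Finset.range (n+1), Z i ω ≤ ∑ _i ∈ Finset.range (n+1), (1:ℝ) :=
            Finset.sum_le_sum (fun i _ => (hZ01 i ω).2)
        _ = (n+1 : ℝ) := by simp
    rw [abs_of_nonneg (Real.exp_nonneg _)]
    apply Real.exp_le_exp.2
    have h1 : (∑ i ∈ Finset.range (n+1), Z i ω) - (n+1) * μ ≤ (n+1) * (1 + |μ|) := by
      have := neg_abs_le μ
      nlinarith [abs_nonneg μ, Nat.cast_nonneg (α := ℝ) n]
    nlinarith [Nat.cast_nonneg (α := ℝ) n, abs_nonneg μ]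
  have hFint : ∀ n, Integrable (F n) P := fun n =>
    integrable_of_bdd ((hFSM n).mono (𝒢.le n)) (hFbd n)
  have hF0 : ∀ n ω, 0 ≤ F n ω := fun n ω => Real.exp_nonneg _
  -- conditional expectation step
  have hcondg : ∀ n, P[g (n+1)|𝒢 n] =ᵐ[P] fun _ => G := by
    intro n
    have hφ : Measurable (fun y : ℝ => Real.exp (l * (y - μ))) := by fun_prop
    have hSM : StronglyMeasurable[MeasurableSpace.comap (Z (n+1)) inferInstance] (g (n+1)) :=
      (hφ.comp (comap_measurable (Z (n+1)))).stronglyMeasurable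
    have hindp : Indep (MeasurableSpace.comap (Z (n+1)) inferInstance) (𝒢 n) P :=
      hindep.indep_comap_natural_of_lt hmeas n.lt_succ_self
    have h := condExp_indep_eq ((hmeas (n+1)).measurable.comap_le) (𝒢.le n) hSM hindp
    refine h.trans ?_
    rw [hgG (n+1)]
  have hcond : ∀ n, P[F (n+1)|𝒢 n] =ᵐ[P] fun ω => F n ω * G := by
    intro n
    rw [hFsucc n]
    have h1 : P[F n * g (n+1)|𝒢 n] =ᵐ[P] F n * P[g (n+1)|𝒢 n] :=
      condExp_mul_of_stronglyMeasurable_left (hFSM n) (by rw [← hFsucc n]; exact hFint (n+1))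
        (hgint (n+1))
    refine h1.trans ?_
    filter_upwards [hcondg n] with ω hω
    simp only [Pi.mul_apply, hω]
  have hsub : Submartingale F 𝒢 P := by
    refine submartingale_nat hFSM hFint (fun n => ?_)
    filter_upwards [hcond n] with ω hω
    rw [hω]
    exact le_mul_of_one_le_right (hF0 n ω) hG1
  have hintF : ∀ n, ∫ ω, F n ω ∂P = G^(n+1) := by
    intro n
    induction n with
    | zero =>
      have h0 : F 0 = g 0 := by
        funext ω; simp only [hF, hg, Finset.sum_range_one]; norm_num
      rw [h0, hgG 0]; ring
    | succ n ih =>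
      have h1 : ∫ ω, F (n+1) ω ∂P = ∫ ω, (P[F (n+1)|𝒢 n]) ω ∂P :=
        (integral_condExp (𝒢.le n)).symm
      rw [h1, integral_congr_ae (hcond n), integral_mul_const, ih]
      ring
  refine ⟨hsub, fun n => ?_⟩
  rw [hintF n]
  calc G^(n+1) ≤ (Real.exp (l^2/8))^(n+1) :=
        pow_le_pow_left₀ (le_trans zero_le_one hG1) hGle _
    _ = Real.exp ((n+1) * l^2 / 8) := by
        rw [← Real.exp_nat_mul]
        congr 1
        push_cast
        ring


-- telescoping inequality
lemma tele_aux (i : ℕ) :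
    Real.exp (-(12/11) * Real.log ((i:ℝ)+2)) ≤
    22 * (Real.exp (-(1/11) * Real.log ((i:ℝ)+1)) -
      Real.exp (-(1/11) * Real.log ((i:ℝ)+2))) := by
  set L := Real.log ((i:ℝ)+2) with hLdef
  set l' := Real.log ((i:ℝ)+1) with hldef
  have hi2 : (0:ℝ) < (i:ℝ)+2 := by positivity
  have hi1 : (0:ℝ) < (i:ℝ)+1 := by positivity
  have hgap : 1/((i:ℝ)+2) ≤ L - l' := by
    have h1 : Real.log (((i:ℝ)+1)/((i:ℝ)+2)) ≤ ((i:ℝ)+1)/((i:ℝ)+2) - 1 :=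
      Real.log_le_sub_one_of_pos (by positivity)
    have h2 : Real.log (((i:ℝ)+1)/((i:ℝ)+2)) = l' - L := by
      rw [Real.log_div hi1.ne' hi2.ne']
    have h3 : ((i:ℝ)+1)/((i:ℝ)+2) - 1 = -(1/((i:ℝ)+2)) := by
      field_simp
      norm_num
    rw [h2, h3] at h1
    linarith
  have hLl : 0 ≤ L - l' := le_trans (by positivity) hgap
  have e1 : Real.exp (-(12/11) * L) = Real.exp (-L) * Real.exp (-(1/11) * L) := by
    rw [← Real.exp_add]; ring_nf
  have e2 : Real.exp (-(1/11) * l') =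
      Real.exp (-(1/11) * L) * Real.exp ((1/11) * (L - l')) := by
    rw [← Real.exp_add]; ring_nf
  have e3 : 1 + (1/11) * (L - l') ≤ Real.exp ((1/11) * (L - l')) := by
    have := Real.add_one_le_exp ((1/11) * (L - l'))
    linarith
  have hexpL : Real.exp (-L) = 1/((i:ℝ)+2) := by
    rw [Real.exp_neg, hLdef, Real.exp_log hi2, one_div]
  have hP : 0 < Real.exp (-(1/11) * L) := Real.exp_pos _
  have h5 : Real.exp (-(1/11) * L) * (1/((i:ℝ)+2)) ≤
      Real.exp (-(1/11) * L) * (L - l') :=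
    mul_le_mul_of_nonneg_left hgap hP.le
  have h6 : Real.exp (-(1/11) * L) * (1 + (1/11) * (L - l')) ≤
      Real.exp (-(1/11) * L) * Real.exp ((1/11) * (L - l')) :=
    mul_le_mul_of_nonneg_left e3 hP.le
  rw [e1, e2, hexpL]
  nlinarith [h5, h6, hP]

lemma series_bound (K : ℕ) :
    ∑ k ∈ Finset.range K, Real.exp (-(12/11) * Real.log ((k:ℝ)+1)) ≤ 23 := by
  set r : ℕ → ℝ := fun k => Real.exp (-(12/11) * Real.log ((k:ℝ)+1)) with hr
  set v : ℕ → ℝ := fun i => Real.exp (-(1/11) * Real.log ((i:ℝ)+1)) with hv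
  cases K with
  | zero => simp
  | succ n =>
    rw [Finset.sum_range_succ']
    show (∑ i ∈ Finset.range n, r (i+1)) + r 0 ≤ 23
    have hr0 : r 0 = 1 := by simp [hr]
    have hstep : ∀ i ∈ Finset.range n, r (i+1) ≤ 22 * (v i - v (i+1)) := by
      intro i _
      have := tele_aux i
      have hc : ((i:ℝ)+1)+1 = (i:ℝ)+2 := by ring
      simp only [hr, hv]
      push_cast
      rw [hc]
      convert this using 3 <;> push_cast <;> ring
    have htel : ∑ i ∈ Finset.range n, (v i - v (i+1)) = v 0 - v n :=
      Finset.sum_range_sub' v n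
    have h1 : ∑ i ∈ Finset.range n, r (i+1) ≤
        ∑ i ∈ Finset.range n, 22 * (v i - v (i+1)) := Finset.sum_le_sum hstep
    rw [← Finset.mul_sum, htel] at h1
    have hv0 : v 0 = 1 := by simp [hv]
    have hvn : 0 ≤ v n := Real.exp_nonneg _
    rw [hv0] at h1
    have h2 : (22:ℝ) * (1 - v n) ≤ 22 := by nlinarith
    linarith

lemma doob_epoch {Ω : Type*} [MeasurableSpace Ω] (P : Measure Ω) [IsProbabilityMeasure P]
    (Z : ℕ → Ω → ℝ) (hmeas : ∀ i, StronglyMeasurable (Z i))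
    (hindep : iIndepFun Z P)
    (hident : ∀ i, IdentDistrib (Z i) (Z 0) P P)
    (hval : ∀ i ω, Z i ω = 0 ∨ Z i ω = 1)
    (μ : ℝ) (hμ : μ = ∫ ω, Z 0 ω ∂P) (l : ℝ) (hl : 0 ≤ l) (tt : ℝ) (n' : ℕ) :
    P {ω | Real.exp (l * tt) ≤ (Finset.range (n'+1)).sup' Finset.nonempty_range_add_one
        (fun j => Real.exp (l * ((∑ i ∈ Finset.range (j+1), Z i ω) - (j+1) * μ)))} ≤
      ENNReal.ofReal (Real.exp (((n':ℝ)+1) * l^2/8 - l * tt)) := by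
  obtain ⟨hsub, hbd⟩ := exp_mart P Z hmeas hindep hident hval μ hμ l hl
  set F : ℕ → Ω → ℝ := fun n ω =>
    Real.exp (l * ((∑ i ∈ Finset.range (n+1), Z i ω) - (n+1) * μ)) with hF
  have hnn : (0 : ℕ → Ω → ℝ) ≤ F := fun n ω => Real.exp_nonneg _
  have h := maximal_ineq hsub hnn (ε := Real.toNNReal (Real.exp (l*tt))) n'
  have hcoe : ((Real.toNNReal (Real.exp (l * tt)) : ℝ≥0) : ℝ) = Real.exp (l * tt) :=
    Real.coe_toNNReal _ (Real.exp_nonneg _)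
  rw [hcoe] at h
  set Sset := {ω | Real.exp (l * tt) ≤ (Finset.range (n'+1)).sup'
      Finset.nonempty_range_add_one fun j => F j ω} with hSset
  have h2 : ∫ ω in Sset, F n' ω ∂P ≤ ∫ ω, F n' ω ∂P :=
    setIntegral_le_integral (hsub.integrable n')
      (Filter.Eventually.of_forall (fun ω => hnn n' ω))
  have h3 : ENNReal.ofReal (Real.exp (l*tt)) * P Sset ≤
      ENNReal.ofReal (Real.exp (((n':ℝ)+1) * l^2/8)) := by
    calc ENNReal.ofReal (Real.exp (l*tt)) * P Sset
        = (Real.toNNReal (Real.exp (l*tt))) • P Sset := by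
          rw [ENNReal.smul_def]; rfl
      _ ≤ ENNReal.ofReal (∫ ω in Sset, F n' ω ∂P) := h
      _ ≤ ENNReal.ofReal (Real.exp (((n':ℝ)+1) * l^2/8)) := by
          apply ENNReal.ofReal_le_ofReal
          exact h2.trans (hbd n')
  have hpos : (0:ℝ≥0∞) < ENNReal.ofReal (Real.exp (l*tt)) := by
    simp [ENNReal.ofReal_pos, Real.exp_pos]
  have h4 : P Sset ≤ ENNReal.ofReal (Real.exp (((n':ℝ)+1) * l^2/8)) /
      ENNReal.ofReal (Real.exp (l*tt)) := by
    rw [ENNReal.le_div_iff_mul_le (Or.inl hpos.ne') (Or.inl ENNReal.ofReal_ne_top)]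
    rw [mul_comm]
    exact h3
  refine h4.trans ?_
  rw [← ENNReal.ofReal_div_of_pos (Real.exp_pos _), ← Real.exp_sub]

/-- **PRoA soundness for certification.** The probability that the certification condition
`μ̂^(J) + τ − ε(δ,J) − 1 ≥ 0` fires while the specification `μ ≥ 1 − τ` is actually violated
is at most `δ`. -/
theorem proa_wrong_certification_le_delta
    {Ω : Type*} [MeasurableSpace Ω] (P : Measure Ω) [IsProbabilityMeasure P]
    (Z : ℕ → Ω → ℝ) (hmeas : ∀ i, StronglyMeasurable (Z i))
    (hindep : iIndepFun Z P)
    (hident : ∀ i, IdentDistrib (Z i) (Z 0) P P)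
    (hval : ∀ i ω, Z i ω = 0 ∨ Z i ω = 1)
    (μ : ℝ) (hμ : μ = ∫ ω, Z 0 ω ∂P)
    (J : Ω → ℕ∞)
    (hJ : ∀ n : ℕ, MeasurableSet[(Filtration.natural Z hmeas) n]
      {ω | J ω ≤ ((n + 1 : ℕ) : ℕ∞)})
    (hJfin : P {ω | J ω ≠ ⊤} = 1)
    (δ τ : ℝ) (hδ : δ ∈ Set.Ioc (0 : ℝ) 1) (hτ : τ ∈ Set.Icc (0 : ℝ) 1) :
    P {ω | 0 ≤ empMean Z (J ω).toNat ω + τ - adaptiveEps δ (J ω).toNat - 1 ∧ μ < 1 - τ} ≤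
      ENNReal.ofReal δ := by
  obtain ⟨hδ0, hδ1⟩ := hδ
  obtain ⟨hτ0, hτ1⟩ := hτ
  have hZ01 : ∀ i ω, 0 ≤ Z i ω ∧ Z i ω ≤ 1 := by
    intro i ω; rcases hval i ω with h | h <;> rw [h] <;> norm_num
  have hμ0 : 0 ≤ μ := by
    rw [hμ]; exact integral_nonneg (fun ω => (hZ01 0 ω).1)
  by_cases hμτ : μ < 1 - τ
  swap
  · have hempty : {ω | 0 ≤ empMean Z (J ω).toNat ω + τ - adaptiveEps δ (J ω).toNat - 1
        ∧ μ < 1 - τ} = ∅ := by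
      ext ω
      simp only [Set.mem_setOf_eq, Set.mem_empty_iff_false, iff_false, not_and]
      intro _
      exact fun h => hμτ h
    rw [hempty]
    simp
  -- constants
  have hlog11 : 0 < Real.log 1.1 := Real.log_pos (by norm_num)
  set c : ℝ := 1 / 1.8 * Real.log (24 / δ) with hc_def
  have hlog24 : 0 < Real.log (24 / δ) := Real.log_pos (by rw [lt_div_iff₀ hδ0]; linarith)
  have hc : 0 < c := by rw [hc_def]; positivity
  set q : ℕ → ℝ := fun k => 0.6 * Real.log ((k:ℝ)+1) + c with hq_def
  have hq : ∀ k, 0 < q k := by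
    intro k
    have h1 : 0 ≤ Real.log ((k:ℝ)+1) :=
      Real.log_nonneg (by linarith [Nat.cast_nonneg (α := ℝ) k])
    simp only [hq_def]; nlinarith
  set tvec : ℕ → ℝ := fun k => Real.sqrt ((1.1:ℝ)^k * q k) with ht_def
  have htpos : ∀ k, 0 < tvec k := fun k =>
    Real.sqrt_pos.mpr (mul_pos (pow_pos (by norm_num) k) (hq k))
  set lam : ℕ → ℝ := fun k => 4 * tvec k / (1.1:ℝ)^(k+1) with hlam_def
  have hApos : ∀ k, (0:ℝ) < (1.1:ℝ)^(k+1) := fun k => pow_pos (by norm_num) _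
  have hlam : ∀ k, 0 < lam k := fun k =>
    div_pos (by linarith [htpos k]) (hApos k)
  set Nk : ℕ → ℕ := fun k => ⌊(1.1:ℝ)^(k+1)⌋₊ with hNk_def
  have hNk1 : ∀ k, 1 ≤ Nk k := fun k => Nat.le_floor (by
    push_cast
    exact one_le_pow₀ (by norm_num))
  have hNkle : ∀ k, (Nk k : ℝ) ≤ (1.1:ℝ)^(k+1) := fun k => Nat.floor_le (hApos k).le
  set B : ℕ → Set Ω := fun k => {ω | Real.exp (lam k * tvec k) ≤
      (Finset.range ((Nk k - 1)+1)).sup' Finset.nonempty_range_add_one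
        (fun j => Real.exp (lam k * ((∑ i ∈ Finset.range (j+1), Z i ω) - (j+1) * μ)))}
    with hB_def
  -- inclusion into union of epoch events
  have hincl : {ω | 0 ≤ empMean Z (J ω).toNat ω + τ - adaptiveEps δ (J ω).toNat - 1
      ∧ μ < 1 - τ} ⊆ ⋃ k, B k := by
    rintro ω ⟨hcert, -⟩
    set n := (J ω).toNat with hn_def
    have hn1 : 1 ≤ n := by
      by_contra hn
      push_neg at hn
      have hn0 : n = 0 := by omega
      rw [hn0] at hcert
      have he1 : empMean Z 0 ω = 0 := by simp [empMean]
      have he2 : adaptiveEps δ 0 = 0 := by simp [adaptiveEps]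
      rw [he1, he2] at hcert
      have : τ = 1 := by linarith
      rw [this] at hμτ
      linarith
    have hnR : (0:ℝ) < n := by exact_mod_cast hn1
    set S := ∑ i ∈ Finset.range n, Z i ω with hS_def
    set w : ℝ := 0.6 * Real.log (Real.log n / Real.log 1.1 + 1) + c with hw_def
    have heps : adaptiveEps δ n = Real.sqrt (w / n) := rfl
    have hcert' : (1 - τ + Real.sqrt (w/n)) * n ≤ S := by
      have h1 : 1 - τ + adaptiveEps δ n ≤ empMean Z n ω := by linarith
      rw [heps] at h1
      rw [empMean] at h1
      calc (1 - τ + Real.sqrt (w/n)) * n ≤ (S/n) * n := by nlinarith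
        _ = S := by field_simp
    set k := ⌊Real.log n / Real.log 1.1⌋₊ with hk_def
    have hx0 : 0 ≤ Real.log n / Real.log 1.1 :=
      div_nonneg (Real.log_nonneg (by exact_mod_cast hn1)) hlog11.le
    have hkle : (k:ℝ) ≤ Real.log n / Real.log 1.1 := Nat.floor_le hx0
    have hk_le : (k:ℝ) * Real.log 1.1 ≤ Real.log n := by
      rw [← le_div_iff₀ hlog11]; exact hkle
    have hk_lt0 : Real.log n / Real.log 1.1 < (k:ℝ)+1 := Nat.lt_floor_add_one _
    have hk_lt : Real.log n < ((k:ℝ)+1) * Real.log 1.1 :=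
      (div_lt_iff₀ hlog11).mp hk_lt0
    have hak : (1.1:ℝ)^k ≤ n := by
      have h1 : ((1.1:ℝ)^k) = Real.exp ((k:ℝ) * Real.log 1.1) := by
        rw [← Real.log_pow, Real.exp_log (pow_pos (by norm_num) k)]
      rw [h1]
      calc Real.exp ((k:ℝ) * Real.log 1.1) ≤ Real.exp (Real.log n) :=
            Real.exp_le_exp.mpr hk_le
        _ = n := Real.exp_log hnR
    have hnk : (n:ℝ) < (1.1:ℝ)^(k+1) := by
      have h1 : ((1.1:ℝ)^(k+1)) = Real.exp (((k+1:ℕ):ℝ) * Real.log 1.1) := by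
        rw [← Real.log_pow, Real.exp_log (pow_pos (by norm_num) _)]
      rw [h1, ← Real.exp_log hnR]
      apply Real.exp_lt_exp.mpr
      push_cast
      exact hk_lt
    have hnNk : n ≤ Nk k := Nat.le_floor hnk.le
    have hwq : q k ≤ w := by
      simp only [hq_def, hw_def]
      have h2 : Real.log ((k:ℝ)+1) ≤ Real.log (Real.log n / Real.log 1.1 + 1) := by
        apply Real.log_le_log (by positivity)
        linarith
      linarith
    have hneps : tvec k ≤ (n:ℝ) * Real.sqrt (w/n) := by
      have h1 : (n:ℝ) * Real.sqrt (w/n) = Real.sqrt (n * w) := by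
        rw [show (n:ℝ) * w = (n:ℝ)^2 * (w/n) by field_simp]
        rw [Real.sqrt_mul (sq_nonneg _), Real.sqrt_sq hnR.le]
      rw [h1, ht_def]
      apply Real.sqrt_le_sqrt
      exact mul_le_mul hak hwq (hq k).le hnR.le
    have hSn : tvec k ≤ S - n * μ := by
      have h2 : (n:ℝ) * μ ≤ n * (1 - τ) := mul_le_mul_of_nonneg_left hμτ.le hnR.le
      have h3 : (1 - τ + Real.sqrt (w/n)) * n = (1-τ)*n + Real.sqrt (w/n) * n := by ring
      rw [h3] at hcert'
      have h4 : (n:ℝ) * Real.sqrt (w/n) = Real.sqrt (w/n) * n := by ring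
      rw [h4] at hneps
      have h5 : (n:ℝ) * (1 - τ) = (1-τ) * n := by ring
      rw [h5] at h2
      linarith
    refine Set.mem_iUnion.mpr ⟨k, ?_⟩
    simp only [hB_def, Set.mem_setOf_eq]
    have hmem : n - 1 ∈ Finset.range ((Nk k - 1)+1) := by
      rw [Finset.mem_range]; omega
    refine le_trans ?_ (Finset.le_sup'
      (fun j => Real.exp (lam k * ((∑ i ∈ Finset.range (j+1), Z i ω) - (j+1) * μ))) hmem)
    show Real.exp (lam k * tvec k) ≤
      Real.exp (lam k * ((∑ i ∈ Finset.range ((n-1)+1), Z i ω) - (((n-1:ℕ):ℝ)+1) * μ))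
    have hc1 : (n-1)+1 = n := by omega
    have hc2 : ((n-1:ℕ):ℝ) + 1 = (n:ℝ) := by
      rw [Nat.cast_sub hn1]; push_cast; ring
    rw [hc1, hc2]
    exact Real.exp_le_exp.mpr (mul_le_mul_of_nonneg_left hSn (hlam k).le)
  -- epoch bound
  have hBk : ∀ k, P (B k) ≤ ENNReal.ofReal (Real.exp (-(2/1.1) * q k)) := by
    intro k
    have h0 := doob_epoch P Z hmeas hindep hident hval μ hμ (lam k) (hlam k).le
      (tvec k) (Nk k - 1)
    refine h0.trans (ENNReal.ofReal_le_ofReal (Real.exp_le_exp.mpr ?_))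
    have hcast : ((Nk k - 1 : ℕ):ℝ) + 1 = (Nk k : ℝ) := by
      rw [Nat.cast_sub (hNk1 k)]; push_cast; ring
    rw [hcast]
    have ht2 : tvec k ^ 2 = (1.1:ℝ)^k * q k := Real.sq_sqrt
      (mul_nonneg (pow_pos (by norm_num : (0:ℝ) < 1.1) k).le (hq k).le)
    have hA := hApos k
    have h1 : (Nk k : ℝ) * lam k^2/8 ≤ (1.1:ℝ)^(k+1) * lam k^2/8 := by
      have := hNkle k
      nlinarith [sq_nonneg (lam k)]
    have h2 : (1.1:ℝ)^(k+1) * lam k^2/8 - lam k * tvec k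
        = -(2 * (tvec k^2) / (1.1:ℝ)^(k+1)) := by
      simp only [hlam_def]
      field_simp
      ring
    have h3 : -(2 * (tvec k^2) / (1.1:ℝ)^(k+1)) = -(2/1.1) * q k := by
      rw [ht2, pow_succ]
      have hk0 : (1.1:ℝ)^k ≠ 0 := (pow_pos (by norm_num : (0:ℝ) < 1.1) k).ne'
      field_simp
    linarith
  -- sum it up
  have hsplit : ∀ k:ℕ, Real.exp (-(2/1.1) * q k) =
      Real.exp (-(12/11) * Real.log ((k:ℝ)+1)) * Real.exp (-(2/1.1) * c) := by
    intro k
    rw [← Real.exp_add]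
    congr 1
    simp only [hq_def]
    ring_nf
  have htsum : ∑' k:ℕ, ENNReal.ofReal (Real.exp (-(12/11) * Real.log ((k:ℝ)+1)))
      ≤ ENNReal.ofReal 23 := by
    rw [ENNReal.tsum_eq_iSup_sum]
    refine iSup_le (fun s => ?_)
    have hsub2 : s ⊆ Finset.range (s.sup id + 1) := fun x hx =>
      Finset.mem_range.mpr (Nat.lt_succ_of_le (Finset.le_sup (f := id) hx))
    calc ∑ k ∈ s, ENNReal.ofReal (Real.exp (-(12/11) * Real.log ((k:ℝ)+1)))
        ≤ ∑ k ∈ Finset.range (s.sup id + 1),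
            ENNReal.ofReal (Real.exp (-(12/11) * Real.log ((k:ℝ)+1))) :=
          Finset.sum_le_sum_of_subset hsub2
      _ = ENNReal.ofReal (∑ k ∈ Finset.range (s.sup id + 1),
            Real.exp (-(12/11) * Real.log ((k:ℝ)+1))) :=
          (ENNReal.ofReal_sum_of_nonneg (fun _ _ => Real.exp_nonneg _)).symm
      _ ≤ ENNReal.ofReal 23 := ENNReal.ofReal_le_ofReal (series_bound _)
  have hfinal : (23:ℝ) * Real.exp (-(2/1.1) * c) ≤ δ := by
    have h2 : -(2/1.1) * c ≤ -Real.log (24/δ) := by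
      rw [hc_def]; nlinarith
    have h1 : Real.exp (-(2/1.1) * c) ≤ δ/24 := by
      calc Real.exp (-(2/1.1)*c) ≤ Real.exp (-Real.log (24/δ)) := Real.exp_le_exp.mpr h2
        _ = δ/24 := by
            rw [Real.exp_neg, Real.exp_log (by positivity), inv_div]
    linarith
  calc P {ω | 0 ≤ empMean Z (J ω).toNat ω + τ - adaptiveEps δ (J ω).toNat - 1 ∧ μ < 1 - τ}
      ≤ P (⋃ k, B k) := measure_mono hincl
    _ ≤ ∑' k, P (B k) := measure_iUnion_le _
    _ ≤ ∑' k, ENNReal.ofReal (Real.exp (-(2/1.1) * q k)) := ENNReal.tsum_le_tsum hBk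
    _ = ∑' k:ℕ, ENNReal.ofReal (Real.exp (-(12/11) * Real.log ((k:ℝ)+1)))
          * ENNReal.ofReal (Real.exp (-(2/1.1) * c)) := by
        congr 1
        funext k
        rw [hsplit k, ENNReal.ofReal_mul (Real.exp_nonneg _)]
    _ = (∑' k:ℕ, ENNReal.ofReal (Real.exp (-(12/11) * Real.log ((k:ℝ)+1))))
          * ENNReal.ofReal (Real.exp (-(2/1.1) * c)) := ENNReal.tsum_mul_right
    _ ≤ ENNReal.ofReal 23 * ENNReal.ofReal (Real.exp (-(2/1.1) * c)) :=
        mul_le_mul_left htsum _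
    _ = ENNReal.ofReal (23 * Real.exp (-(2/1.1) * c)) :=
        (ENNReal.ofReal_mul (by norm_num)).symm
    _ ≤ ENNReal.ofReal δ := ENNReal.ofReal_le_ofReal hfinal
end

section
/- Let (Z_i)_{i≥1} be an i.i.d. sequence of random variables taking values in {0,1}, with common mean μ = E[Z_1]. Let μ̂^(n) = (1/n)·∑_{i=1}^n Z_i, fix δ ∈ (0,1] and τ ∈ [0,1], and define ε(δ, n) = √((0.6·log(log_{1.1} n + 1) + (1/1.8)·log(24/δ))/n). If μ ≠ 1 − τ, then almost surely there exists n ≥ 1 such that either μ̂^(n) + τ − ε(δ, n) − 1 ≥ 0 or μ̂^(n) + τ + ε(δ, n) − 1 < 0; that is, the PRoA sampling procedure terminates with probability one. -/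
open MeasureTheory ProbabilityTheory Filter Topology

lemma log_nat_nonneg (n : ℕ) : 0 ≤ Real.log n := by
  rcases Nat.eq_zero_or_pos n with h | h
  · simp [h]
  · exact Real.log_nonneg (by exact_mod_cast h)

lemma adaptiveEps_tendsto_zero {δ : ℝ} (hδ : 0 < δ) (hδ1 : δ ≤ 1) :
    Tendsto (adaptiveEps δ) atTop (𝓝 0) := by
  have hL : 0 < Real.log 1.1 := Real.log_pos (by norm_num)
  set C : ℝ := (1 / 1.8) * Real.log (24 / δ) with hC
  have hCpos : 0 ≤ C := by
    apply mul_nonneg (by norm_num)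
    apply Real.log_nonneg
    rw [le_div_iff₀ hδ]; linarith
  -- the inner quantity tends to 0
  have hinner : Tendsto
      (fun n : ℕ => (0.6 * Real.log (Real.log n / Real.log 1.1 + 1) + C) / n)
      atTop (𝓝 0) := by
    have hupper : Tendsto
        (fun n : ℕ => 0.6 / Real.log 1.1 * (Real.log n / n) + C / n) atTop (𝓝 0) := by
      have h1 : Tendsto (fun n : ℕ => Real.log n / n) atTop (𝓝 0) := by
        have := (Real.tendsto_pow_log_div_mul_add_atTop 1 0 1 one_ne_zero).comp
          (tendsto_natCast_atTop_atTop (R := ℝ))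
        simpa [Function.comp_def] using this
      have h2 := tendsto_const_div_atTop_nhds_zero_nat C
      simpa using (h1.const_mul (0.6 / Real.log 1.1)).add h2
    refine tendsto_of_tendsto_of_tendsto_of_le_of_le tendsto_const_nhds hupper ?_ ?_
    · intro n
      apply div_nonneg _ (Nat.cast_nonneg n)
      have : (0:ℝ) ≤ Real.log (Real.log n / Real.log 1.1 + 1) := by
        apply Real.log_nonneg
        have := div_nonneg (log_nat_nonneg n) hL.le
        linarith
      positivity
    · intro n
      rcases Nat.eq_zero_or_pos n with rfl | hn
      · simp
      have hnpos : (0:ℝ) < n := by exact_mod_cast hn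
      have hlog : Real.log (Real.log n / Real.log 1.1 + 1) ≤ Real.log n / Real.log 1.1 := by
        have harg : (0:ℝ) < Real.log n / Real.log 1.1 + 1 := by
          have := div_nonneg (log_nat_nonneg n) hL.le; linarith
        have := Real.log_le_sub_one_of_pos harg
        linarith
      have hrhs : 0.6 / Real.log 1.1 * (Real.log n / n) + C / n
          = (0.6 * (Real.log n / Real.log 1.1) + C) / n := by
        field_simp
      simp only []
      rw [hrhs]
      gcongr
  have : Tendsto (fun n : ℕ => Real.sqrt
      ((0.6 * Real.log (Real.log n / Real.log 1.1 + 1) + C) / n)) atTop (𝓝 (Real.sqrt 0)) :=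
    (Real.continuous_sqrt.tendsto 0).comp hinner
  rw [show (0:ℝ) = Real.sqrt 0 by simp]
  exact this

/-- **Almost-sure termination of PRoA.** If `μ ≠ 1 − τ`, then almost surely there exists
`n ≥ 1` at which one of the two PRoA termination conditions holds. -/
theorem proa_terminates_almost_surely
    {Ω : Type*} [MeasurableSpace Ω] (P : Measure Ω) [IsProbabilityMeasure P]
    (Z : ℕ → Ω → ℝ) (hmeas : ∀ i, Measurable (Z i))
    (hindep : iIndepFun Z P)
    (hident : ∀ i, IdentDistrib (Z i) (Z 0) P P)
    (hval : ∀ i ω, Z i ω = 0 ∨ Z i ω = 1)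
    (μ : ℝ) (hμ : μ = ∫ ω, Z 0 ω ∂P)
    (δ τ : ℝ) (hδ : δ ∈ Set.Ioc (0 : ℝ) 1) (hτ : τ ∈ Set.Icc (0 : ℝ) 1)
    (hne : μ ≠ 1 - τ) :
    ∀ᵐ ω ∂P, ∃ n : ℕ, 1 ≤ n ∧
      (0 ≤ empMean Z n ω + τ - adaptiveEps δ n - 1 ∨
        empMean Z n ω + τ + adaptiveEps δ n - 1 < 0) := by
  have hint : Integrable (Z 0) P := by
    refine ⟨(hmeas 0).aestronglyMeasurable, HasFiniteIntegral.of_bounded (C := 1) ?_⟩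
    filter_upwards with ω
    rcases hval 0 ω with h | h <;> simp [h]
  have hpair : Pairwise (Function.onFun (IndepFun · · P) Z) := fun i j hij =>
    hindep.indepFun hij
  have hslln := strong_law_ae_real Z hint hpair hident
  have heps := adaptiveEps_tendsto_zero hδ.1 hδ.2
  filter_upwards [hslln] with ω hω
  have hμ' : Tendsto (fun n : ℕ => empMean Z n ω) atTop (𝓝 μ) := by
    rw [hμ]; exact hω
  rcases lt_or_gt_of_ne (sub_ne_zero_of_ne hne) with hlt | hgt
  · -- μ + τ - 1 < 0 : refuse branch
    have h : Tendsto (fun n : ℕ => empMean Z n ω + τ + adaptiveEps δ n - 1) atTop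
        (𝓝 (μ + τ + 0 - 1)) := (((hμ'.add_const τ).add heps).sub_const 1)
    have hneg : μ + τ + 0 - 1 < 0 := by linarith [sub_neg.mpr (sub_lt_iff_lt_add.mp hlt)]
    have := (h.eventually (eventually_lt_nhds hneg)).and (eventually_ge_atTop 1)
    obtain ⟨n, hn1, hn2⟩ := this.exists
    exact ⟨n, hn2, Or.inr hn1⟩
  · -- μ + τ - 1 > 0 : certify branch
    have h : Tendsto (fun n : ℕ => empMean Z n ω + τ - adaptiveEps δ n - 1) atTop
        (𝓝 (μ + τ - 0 - 1)) := (((hμ'.add_const τ).sub heps).sub_const 1)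
    have hpos : 0 < μ + τ - 0 - 1 := by linarith [sub_pos.mpr hgt]
    have := (h.eventually (eventually_gt_nhds hpos)).and (eventually_ge_atTop 1)
    obtain ⟨n, hn1, hn2⟩ := this.exists
    exact ⟨n, hn2, Or.inl hn1.le⟩
end

section
/- Let (Z_i)_{i≥1} be an i.i.d. sequence of random variables taking values in {0,1}, with common mean μ = E[Z_1], and assume μ ≠ 1 − τ for a fixed tolerance level τ ∈ [0,1]. Fix δ ∈ (0,1], let μ̂^(n) = (1/n)·∑_{i=1}^n Z_i and ε(δ, n) = √((0.6·log(log_{1.1} n + 1) + (1/1.8)·log(24/δ))/n), and define the random time J = inf{ n ≥ 1 : μ̂^(n) + τ − ε(δ, n) − 1 ≥ 0 or μ̂^(n) + τ + ε(δ, n) − 1 < 0 }. Then J is a stopping time with respect to the natural filtration of (Z_i), P[J < ∞] = 1, and the probability that PRoA's decision at time J is wrong is at most δ: P[ (μ̂^(J) + τ − ε(δ, J) − 1 ≥ 0 and μ < 1 − τ) or (μ̂^(J) + τ + ε(δ, J) − 1 < 0 and μ ≥ 1 − τ) ] ≤ δ. -/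
open MeasureTheory ProbabilityTheory Finset
open scoped ENNReal NNReal



open MeasureTheory ProbabilityTheory

section AuxLemmas

/-- Hoeffding's lemma for Bernoulli: key log bound. -/
lemma hoeff_log_bound {p q : ℝ} (hp : 0 ≤ p) (hq : 0 ≤ q) (hpq : p + q = 1)
    {l : ℝ} (hl : 0 ≤ l) :
    Real.log (q + p * Real.exp l) ≤ p * l + l ^ 2 / 8 := by
  -- denominator positivity
  have hD : ∀ x : ℝ, 0 < q + p * Real.exp x := by
    intro x
    rcases eq_or_lt_of_le hp with h | h
    · have : q = 1 := by linarith
      positivity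
    · positivity
  -- derivative facts
  have hDd : ∀ x : ℝ, HasDerivAt (fun y => q + p * Real.exp y) (p * Real.exp x) x := by
    intro x
    simpa using ((Real.hasDerivAt_exp x).const_mul p).const_add q
  set φ : ℝ → ℝ := fun x => x / 4 + p - p * Real.exp x / (q + p * Real.exp x) with hφdef
  have hφd : ∀ x : ℝ, HasDerivAt φ
      (1 / 4 - p * q * Real.exp x / (q + p * Real.exp x) ^ 2) x := by
    intro x
    have h1 : HasDerivAt (fun y => p * Real.exp y) (p * Real.exp x) x :=
      (Real.hasDerivAt_exp x).const_mul p
    have h2 := (h1.div (hDd x) (hD x).ne')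
    have h3 := ((hasDerivAt_id x).div_const 4).add_const p
    have h4 := h3.sub h2
    refine h4.congr_deriv ?_
    have hne := (hD x).ne'
    field_simp
    ring
  have hφmono : MonotoneOn φ (Set.Ici (0:ℝ)) := by
    refine monotoneOn_of_deriv_nonneg (convex_Ici 0)
      (fun x _ => ((hφd x).differentiableAt.continuousAt).continuousWithinAt)
      (fun x _ => ((hφd x).differentiableAt.differentiableWithinAt))
      ?_
    intro x _
    rw [(hφd x).deriv]
    have key : 4 * (p * q * Real.exp x) ≤ (q + p * Real.exp x) ^ 2 := by
      nlinarith [sq_nonneg (q - p * Real.exp x), Real.exp_pos x]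
    have h2 := sq_nonneg (q + p * Real.exp x)
    have hsq : (0:ℝ) < (q + p * Real.exp x) ^ 2 := pow_pos (hD x) 2
    rw [sub_nonneg, div_le_iff₀ hsq]
    nlinarith
  have hφ0 : φ 0 = 0 := by
    have : q + p = 1 := by linarith
    simp only [hφdef, Real.exp_zero, mul_one, zero_div, zero_add, this]
    simp
  have hφnonneg : ∀ x : ℝ, 0 ≤ x → 0 ≤ φ x := by
    intro x hx
    have := hφmono (Set.self_mem_Ici) (Set.mem_Ici.2 hx) hx
    rwa [hφ0] at this
  -- main function
  set h : ℝ → ℝ := fun x => p * x + x ^ 2 / 8 - Real.log (q + p * Real.exp x) with hhdef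
  have hhd : ∀ x : ℝ, HasDerivAt h (φ x) x := by
    intro x
    have h1 : HasDerivAt (fun y => p * y + y ^ 2 / 8) (p + x * 2 / 8) x := by
      have := ((hasDerivAt_id x).const_mul p).add
        (((hasDerivAt_pow 2 x)).div_const 8)
      exact this.congr_deriv (by norm_num [mul_comm])
    have h2 : HasDerivAt (fun y => Real.log (q + p * Real.exp y))
        ((p * Real.exp x) / (q + p * Real.exp x)) x := (hDd x).log (hD x).ne'
    have h3 := h1.sub h2
    refine h3.congr_deriv ?_
    simp only [hφdef]
    ring
  have hhmono : MonotoneOn h (Set.Ici (0:ℝ)) := by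
    refine monotoneOn_of_deriv_nonneg (convex_Ici 0)
      (fun x _ => ((hhd x).differentiableAt.continuousAt).continuousWithinAt)
      (fun x _ => ((hhd x).differentiableAt.differentiableWithinAt))
      ?_
    intro x hx
    rw [(hhd x).deriv]
    exact hφnonneg x (le_of_lt (by simpa using hx))
  have hh0 : h 0 = 0 := by
    have : q + p = 1 := by linarith
    simp only [hhdef, Real.exp_zero, mul_one, mul_zero, this]
    simp
  have := hhmono (Set.self_mem_Ici) (Set.mem_Ici.2 hl) hl
  rw [hh0] at this
  simp only [hhdef] at this
  linarith

section MGF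
variable {Ω : Type*} [MeasurableSpace Ω] (P : Measure Ω) [IsProbabilityMeasure P]

lemma bernoulli_integrable {Z : Ω → ℝ} (hm : StronglyMeasurable Z)
    (hval : ∀ ω, Z ω = 0 ∨ Z ω = 1) : Integrable Z P := by
  refine Integrable.mono' (integrable_const 1) hm.aestronglyMeasurable ?_
  refine Filter.Eventually.of_forall fun ω => ?_
  rcases hval ω with h | h <;> simp [h]

lemma bernoulli_mean_mem {Z : Ω → ℝ} (hm : StronglyMeasurable Z)
    (hval : ∀ ω, Z ω = 0 ∨ Z ω = 1) :
    0 ≤ ∫ ω, Z ω ∂P ∧ ∫ ω, Z ω ∂P ≤ 1 := by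
  constructor
  · refine integral_nonneg fun ω => ?_
    rcases hval ω with h | h <;> simp [h]
  · calc ∫ ω, Z ω ∂P ≤ ∫ _ω, (1:ℝ) ∂P := by
          refine integral_mono (bernoulli_integrable P hm hval) (integrable_const 1) fun ω => ?_
          rcases hval ω with h | h <;> simp [h]
    _ = 1 := by simp

lemma bernoulli_mgf {Z : Ω → ℝ} (hm : StronglyMeasurable Z)
    (hval : ∀ ω, Z ω = 0 ∨ Z ω = 1) {l : ℝ} (hl : 0 ≤ l) (p : ℝ) (hp : p = ∫ ω, Z ω ∂P) :
    (∫ ω, Real.exp (l * (Z ω - p)) ∂P) ≤ Real.exp (l ^ 2 / 8) ∧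
      1 ≤ ∫ ω, Real.exp (l * (Z ω - p)) ∂P := by
  obtain ⟨hp0, hp1⟩ := bernoulli_mean_mem P hm hval
  rw [← hp] at hp0 hp1
  have hint : Integrable Z P := bernoulli_integrable P hm hval
  have hptw : ∀ ω, Real.exp (l * (Z ω - p)) =
      Real.exp (-(l * p)) * (1 + (Real.exp l - 1) * Z ω) := by
    intro ω
    rcases hval ω with h | h
    · simp [h, mul_comm]
    · rw [h, mul_one]
      have : l * (1 - p) = -(l*p) + l := by ring
      rw [this, Real.exp_add]
      ring
  have hI : ∫ ω, Real.exp (l * (Z ω - p)) ∂P =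
      Real.exp (-(l * p)) * (1 + (Real.exp l - 1) * p) := by
    rw [integral_congr_ae (Filter.Eventually.of_forall hptw)]
    rw [integral_const_mul]
    congr 1
    rw [integral_add (integrable_const 1) (hint.const_mul _)]
    simp [integral_const_mul, hp]
  have hq0 : 0 ≤ 1 - p := by linarith
  have hkey : (1 - p) + p * Real.exp l = 1 + (Real.exp l - 1) * p := by ring
  have hDpos : 0 < (1 - p) + p * Real.exp l := by
    rcases eq_or_lt_of_le hp0 with h | h
    · rw [← h]; norm_num
    · positivity
  constructor
  · have hlog := hoeff_log_bound hp0 hq0 (by ring) hl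
    have := Real.exp_le_exp.2 hlog
    rw [Real.exp_log hDpos] at this
    rw [hI, ← hkey]
    calc Real.exp (-(l * p)) * ((1 - p) + p * Real.exp l)
        ≤ Real.exp (-(l * p)) * Real.exp (p * l + l ^ 2 / 8) := by
          exact mul_le_mul_of_nonneg_left this (Real.exp_nonneg _)
      _ = Real.exp (l ^ 2 / 8) := by rw [← Real.exp_add]; ring_nf
  · have hconv : Real.exp (p * l) ≤ (1 - p) + p * Real.exp l := by
      have h := convexOn_exp.2 (Set.mem_univ (0:ℝ)) (Set.mem_univ l) hq0 hp0 (by ring)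
      simpa [smul_eq_mul] using h
    rw [hI, ← hkey]
    calc (1:ℝ) = Real.exp (-(l * p)) * Real.exp (p * l) := by
          rw [← Real.exp_add]
          have : -(l*p) + p*l = 0 := by ring
          rw [this, Real.exp_zero]
      _ ≤ Real.exp (-(l * p)) * ((1 - p) + p * Real.exp l) :=
          mul_le_mul_of_nonneg_left hconv (Real.exp_nonneg _)

end MGF

section Maximal
variable {Ω : Type*} [MeasurableSpace Ω] (P : Measure Ω) [IsProbabilityMeasure P]

lemma one_sided_maximal (Z : ℕ → Ω → ℝ) (hmeas : ∀ i, StronglyMeasurable (Z i))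
    (hindep : iIndepFun Z P)
    (hident : ∀ i, IdentDistrib (Z i) (Z 0) P P)
    (hval : ∀ i ω, Z i ω = 0 ∨ Z i ω = 1)
    (μ : ℝ) (hμ : μ = ∫ ω, Z 0 ω ∂P)
    (N : ℕ) (hN : 1 ≤ N) (t : ℝ) (ht : 0 < t) :
    P {ω | ∃ n, 1 ≤ n ∧ n ≤ N ∧ t ≤ (∑ i ∈ Finset.range n, Z i ω) - n * μ} ≤
      ENNReal.ofReal (Real.exp (-2 * t ^ 2 / N)) := by
  have hμi : ∀ i, μ = ∫ ω, Z i ω ∂P := fun i => by rw [hμ, (hident i).integral_eq]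
  obtain ⟨hμ0, hμ1⟩ := hμ ▸ bernoulli_mean_mem P (hmeas 0) (hval 0)
  set l : ℝ := 4 * t / N with hl_def
  have hl : 0 < l := by positivity
  set 𝒢 := MeasureTheory.Filtration.natural Z hmeas with h𝒢
  set g : ℕ → Ω → ℝ := fun n ω =>
    Real.exp (l * ((∑ i ∈ Finset.range (n + 1), Z i ω) - (n + 1) * μ)) with hg_def
  -- pointwise bound on partial sums
  have hSb : ∀ n ω, (∑ i ∈ Finset.range n, Z i ω) - n * μ ≤ n := by
    intro n ω
    have h1 : (∑ i ∈ Finset.range n, Z i ω) ≤ n := by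
      calc (∑ i ∈ Finset.range n, Z i ω) ≤ ∑ _i ∈ Finset.range n, (1:ℝ) :=
            Finset.sum_le_sum fun i _ => by rcases hval i ω with h | h <;> simp [h]
        _ = n := by simp
    nlinarith [Nat.cast_nonneg (α := ℝ) n]
  have hgpos : ∀ n ω, 0 < g n ω := fun n ω => Real.exp_pos _
  -- adaptedness
  have hadp : StronglyAdapted 𝒢 g := by
    intro n
    have hsum : StronglyMeasurable[𝒢 n]
        (fun ω => (∑ i ∈ Finset.range (n + 1), Z i ω)) := by
      apply Finset.stronglyMeasurable_fun_sum
      intro i hi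
      have hin : i ≤ n := by simpa [Nat.lt_succ_iff] using hi
      exact (MeasureTheory.Filtration.stronglyAdapted_natural hmeas i).mono (𝒢.mono hin)
    have : StronglyMeasurable[𝒢 n]
        (fun ω => l * ((∑ i ∈ Finset.range (n + 1), Z i ω) - (n + 1) * μ)) :=
      ((hsum.sub stronglyMeasurable_const).const_mul l)
    exact (Real.continuous_exp.comp_stronglyMeasurable this)
  -- integrability
  have hint : ∀ n, Integrable (g n) P := by
    intro n
    refine Integrable.mono' (integrable_const (Real.exp (l * (n + 1))))
      ((hadp n).mono (𝒢.le n)).aestronglyMeasurable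
      (Filter.Eventually.of_forall fun ω => ?_)
    rw [Real.norm_eq_abs, abs_of_pos (hgpos n ω)]
    apply Real.exp_le_exp.2
    have := hSb (n + 1) ω
    have hln : (0:ℝ) ≤ l := hl.le
    push_cast at this ⊢
    nlinarith
  -- the single-step factor
  set h : ℕ → Ω → ℝ := fun n ω => Real.exp (l * (Z n ω - μ)) with hh_def
  have hsplit : ∀ n, g (n + 1) = g n * h (n + 1) := by
    intro n
    funext ω
    simp only [hg_def, hh_def, Pi.mul_apply, ← Real.exp_add]
    congr 1
    rw [Finset.sum_range_succ]
    push_cast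
    ring
  have hh_meas : ∀ n, StronglyMeasurable (h n) := fun n =>
    (Real.continuous_exp.comp_stronglyMeasurable
      (((hmeas n).sub stronglyMeasurable_const).const_mul l))
  have hh_int : ∀ n, Integrable (h n) P := by
    intro n
    refine Integrable.mono' (integrable_const (Real.exp (l * 1)))
      (hh_meas n).aestronglyMeasurable (Filter.Eventually.of_forall fun ω => ?_)
    rw [Real.norm_eq_abs, abs_of_pos (Real.exp_pos _)]
    apply Real.exp_le_exp.2
    have : Z n ω - μ ≤ 1 := by rcases hval n ω with h | h <;> rw [h] <;> linarith
    nlinarith [hl.le]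
  have hh_mgf : ∀ n, (∫ ω, h n ω ∂P) ≤ Real.exp (l ^ 2 / 8) ∧ 1 ≤ ∫ ω, h n ω ∂P :=
    fun n => bernoulli_mgf P (hmeas n) (hval n) hl.le μ (hμi n)
  -- conditional expectation step
  have hcond : ∀ n, P[g (n + 1)|𝒢 n] =ᵐ[P] fun ω' => g n ω' * ∫ ω, h (n + 1) ω ∂P := by
    intro n
    have h1 : P[g (n + 1)|𝒢 n] =ᵐ[P] P[g n * h (n + 1)|𝒢 n] := by rw [hsplit n]
    have h2 : P[g n * h (n + 1)|𝒢 n] =ᵐ[P] g n * P[h (n + 1)|𝒢 n] := by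
      refine condExp_mul_of_stronglyMeasurable_left (hadp n) ?_ (hh_int (n + 1))
      rw [← hsplit n]; exact hint (n + 1)
    have hindp : Indep (MeasurableSpace.comap (Z (n + 1)) inferInstance) (𝒢 n) P :=
      hindep.indep_comap_natural_of_lt hmeas (Nat.lt_succ_self n)
    have hindp' : Indep (MeasurableSpace.comap (h (n + 1)) inferInstance) (𝒢 n) P := by
      refine ProbabilityTheory.indep_of_indep_of_le_left hindp ?_
      have : Measurable[MeasurableSpace.comap (Z (n + 1)) inferInstance] (h (n + 1)) := by
        have hZ : Measurable[MeasurableSpace.comap (Z (n + 1)) inferInstance] (Z (n + 1)) :=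
          measurable_iff_comap_le.2 le_rfl
        exact (Real.measurable_exp.comp (((measurable_id.sub measurable_const).const_mul l))).comp hZ
      exact measurable_iff_comap_le.1 this
    have h3 : P[h (n + 1)|𝒢 n] =ᵐ[P] fun _ => ∫ ω, h (n + 1) ω ∂P := by
      refine condExp_indep_eq ?_ (𝒢.le n) ?_ hindp'
      · exact (hh_meas (n + 1)).measurable.comap_le
      · exact (comap_measurable (h (n+1))).stronglyMeasurable
    refine h1.trans (h2.trans ?_)
    filter_upwards [h3] with ω hω
    simp only [Pi.mul_apply, hω]
  -- submartingale
  have hsub : Submartingale g 𝒢 P := by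
    refine submartingale_nat hadp hint fun n => ?_
    filter_upwards [hcond n] with ω hω
    rw [hω]
    have h1 := (hh_mgf (n + 1)).2
    have h2 := (hgpos n ω).le
    nlinarith
  -- expectation bound by induction
  have hexp : ∀ n, (∫ ω, g n ω ∂P) ≤ Real.exp ((n + 1) * (l ^ 2 / 8)) := by
    intro n
    induction n with
    | zero =>
      have := (bernoulli_mgf P (hmeas 0) (hval 0) hl.le μ (hμi 0)).1
      calc (∫ ω, g 0 ω ∂P) = ∫ ω, Real.exp (l * (Z 0 ω - μ)) ∂P := by
            refine integral_congr_ae (Filter.Eventually.of_forall fun ω => ?_)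
            simp [hg_def]
        _ ≤ Real.exp (l ^ 2 / 8) := this
        _ ≤ Real.exp (((0:ℕ) + 1) * (l ^ 2 / 8)) := by push_cast; norm_num
    | succ n ih =>
      have h0 : (∫ ω, g (n + 1) ω ∂P) = ∫ ω, (P[g (n + 1)|𝒢 n]) ω ∂P :=
        (integral_condExp (𝒢.le n)).symm
      have h1 : (∫ ω, (P[g (n + 1)|𝒢 n]) ω ∂P) =
          ∫ ω, g n ω * (∫ ω', h (n + 1) ω' ∂P) ∂P := integral_congr_ae (hcond n)
      have h2 : (∫ ω, g n ω * (∫ ω', h (n + 1) ω' ∂P) ∂P) =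
          (∫ ω, g n ω ∂P) * ∫ ω', h (n + 1) ω' ∂P := integral_mul_const _ _
      rw [h0, h1, h2]
      have hEh := hh_mgf (n + 1)
      have hEg0 : 0 ≤ ∫ ω, g n ω ∂P := integral_nonneg fun ω => (hgpos n ω).le
      calc (∫ ω, g n ω ∂P) * ∫ ω', h (n + 1) ω' ∂P
          ≤ Real.exp ((n + 1) * (l ^ 2 / 8)) * Real.exp (l ^ 2 / 8) := by
            apply mul_le_mul ih hEh.1 (le_trans zero_le_one hEh.2) (Real.exp_nonneg _)
        _ = Real.exp ((((n:ℕ)+1:ℕ) + 1) * (l ^ 2 / 8)) := by rw [← Real.exp_add]; push_cast; ring_nf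
      -- cast
  -- Doob's maximal inequality
  set ε : ℝ≥0 := (Real.exp (l * t)).toNNReal with hε_def
  have hεcoe : (ε : ℝ) = Real.exp (l * t) := Real.coe_toNNReal _ (Real.exp_nonneg _)
  have hmax := maximal_ineq hsub (fun n ω => (hgpos n ω).le) (ε := ε) (N - 1)
  have hNsub : N - 1 + 1 = N := Nat.succ_pred_eq_of_pos hN
  -- event inclusion
  have hincl : {ω | ∃ n, 1 ≤ n ∧ n ≤ N ∧ t ≤ (∑ i ∈ Finset.range n, Z i ω) - n * μ} ⊆
      {ω | (ε : ℝ) ≤ (Finset.range (N - 1 + 1)).sup' Finset.nonempty_range_add_one fun k => g k ω} := by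
    rintro ω ⟨n, hn1, hnN, hnt⟩
    have hmem : n - 1 ∈ Finset.range (N - 1 + 1) := by
      rw [hNsub, Finset.mem_range]
      omega
    refine Set.mem_setOf_eq ▸ le_trans ?_ (Finset.le_sup' (fun k => g k ω) hmem)
    rw [hεcoe, hg_def]
    simp only
    have hn1' : n - 1 + 1 = n := Nat.succ_pred_eq_of_pos hn1
    rw [hn1']
    have hc : ((n - 1 : ℕ) : ℝ) + 1 = n := by
      push_cast [Nat.cast_sub hn1]; ring
    rw [hc]
    exact Real.exp_le_exp.2 (mul_le_mul_of_nonneg_left hnt hl.le)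
  -- combine
  have hset_int : (∫ ω in {ω | (ε : ℝ) ≤ (Finset.range (N - 1 + 1)).sup'
      Finset.nonempty_range_add_one fun k => g k ω}, g (N - 1) ω ∂P) ≤ ∫ ω, g (N - 1) ω ∂P :=
    setIntegral_le_integral (hint (N - 1)) (Filter.Eventually.of_forall fun ω => (hgpos _ ω).le)
  have hbound : (ε : ℝ≥0∞) * P {ω | (ε : ℝ) ≤ (Finset.range (N - 1 + 1)).sup'
      Finset.nonempty_range_add_one fun k => g k ω} ≤
      ENNReal.ofReal (Real.exp (N * (l ^ 2 / 8))) := by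
    refine le_trans hmax ?_
    refine le_trans (ENNReal.ofReal_le_ofReal hset_int) ?_
    refine ENNReal.ofReal_le_ofReal ?_
    have := hexp (N - 1)
    calc (∫ ω, g (N - 1) ω ∂P) ≤ Real.exp (((N:ℝ) - 1 + 1) * (l ^ 2 / 8)) := by
          have hc : ((N - 1 : ℕ) : ℝ) = (N : ℝ) - 1 := by
            push_cast [Nat.cast_sub hN]; ring
          rw [← hc]; exact this
      _ = Real.exp ((N:ℝ) * (l ^ 2 / 8)) := by ring_nf
  have hεcoe2 : (ε : ℝ≥0∞) = ENNReal.ofReal (Real.exp (l * t)) := by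
    rw [hε_def, ENNReal.ofReal]
  have hεpos : (0:ℝ≥0∞) < (ε : ℝ≥0∞) := by
    rw [hεcoe2]
    exact ENNReal.ofReal_pos.2 (Real.exp_pos _)
  have hεtop : (ε : ℝ≥0∞) ≠ ⊤ := ENNReal.coe_ne_top
  have hfinal : P {ω | ∃ n, 1 ≤ n ∧ n ≤ N ∧ t ≤ (∑ i ∈ Finset.range n, Z i ω) - n * μ} ≤
      ENNReal.ofReal (Real.exp (N * (l ^ 2 / 8))) / (ε : ℝ≥0∞) := by
    rw [ENNReal.le_div_iff_mul_le (Or.inl hεpos.ne') (Or.inl hεtop), mul_comm]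
    exact le_trans (mul_le_mul_right (measure_mono (μ := P) hincl) _) hbound
  refine le_trans hfinal ?_
  rw [hεcoe2, ← ENNReal.ofReal_div_of_pos (Real.exp_pos _), ← Real.exp_sub]
  have hN0 : (0:ℝ) < N := by exact_mod_cast hN
  have hexp_eq : (N:ℝ) * (l ^ 2 / 8) - l * t = -2 * t ^ 2 / N := by
    rw [hl_def]; field_simp; ring
  rw [hexp_eq]
end Maximal

/-- Key step: `(n+1)^(-12/11) ≤ 11 (n^(-1/11) - (n+1)^(-1/11))` for `1 ≤ n`. -/
lemma zeta_step {n : ℕ} (hn : 1 ≤ n) :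
    ((n:ℝ) + 1) ^ (-(12/11) : ℝ) ≤
      11 * ((n:ℝ) ^ (-(1/11) : ℝ) - ((n:ℝ) + 1) ^ (-(1/11) : ℝ)) := by
  have ha : (0:ℝ) < n := by exact_mod_cast hn
  have hb : (0:ℝ) < (n:ℝ) + 1 := by linarith
  set a : ℝ := (n:ℝ) with ha_def
  set b : ℝ := (n:ℝ) + 1 with hb_def
  have hlog : 1 / b ≤ Real.log b - Real.log a := by
    have h1 : Real.log (a / b) ≤ a / b - 1 := Real.log_le_sub_one_of_pos (by positivity)
    rw [Real.log_div ha.ne' hb.ne'] at h1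
    have : a / b - 1 = -(1 / b) := by
      rw [hb_def, ha_def]; field_simp; ring
    rw [this] at h1
    linarith
  have hexp : 1 + (1/11) * (Real.log b - Real.log a) ≤
      Real.exp ((1/11) * (Real.log b - Real.log a)) := by
    have := Real.add_one_le_exp ((1/11) * (Real.log b - Real.log a))
    linarith
  have hA : a ^ (-(1/11) : ℝ) = Real.exp (-(1/11) * Real.log a) := by
    rw [Real.rpow_def_of_pos ha]; ring_nf
  have hB : b ^ (-(1/11) : ℝ) = Real.exp (-(1/11) * Real.log b) := by
    rw [Real.rpow_def_of_pos hb]; ring_nf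
  have hB2 : b ^ (-(12/11) : ℝ) = Real.exp (-(1/11) * Real.log b) * (1 / b) := by
    rw [Real.rpow_def_of_pos hb]
    rw [show (1:ℝ)/b = Real.exp (-Real.log b) by
      rw [Real.exp_neg, Real.exp_log hb, one_div]]
    rw [← Real.exp_add]
    ring_nf
  have hkey : Real.exp (-(1/11) * Real.log b) * (1 + (1/11) * (Real.log b - Real.log a)) ≤
      Real.exp (-(1/11) * Real.log a) := by
    calc Real.exp (-(1/11) * Real.log b) * (1 + (1/11) * (Real.log b - Real.log a))
        ≤ Real.exp (-(1/11) * Real.log b) * Real.exp ((1/11) * (Real.log b - Real.log a)) :=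
          mul_le_mul_of_nonneg_left hexp (Real.exp_nonneg _)
      _ = Real.exp (-(1/11) * Real.log a) := by rw [← Real.exp_add]; ring_nf
  have hmul : Real.exp (-(1/11) * Real.log b) * ((1/11) * (1 / b)) ≤
      Real.exp (-(1/11) * Real.log b) * ((1/11) * (Real.log b - Real.log a)) := by
    apply mul_le_mul_of_nonneg_left _ (Real.exp_nonneg _)
    apply mul_le_mul_of_nonneg_left hlog (by norm_num)
  rw [hA, hB, hB2]
  nlinarith [Real.exp_nonneg (-(1/11) * Real.log b)]

lemma zeta_bound : ∀ n : ℕ, (∑ k ∈ Finset.range n, ((k:ℝ) + 1) ^ (-(12/11) : ℝ)) ≤ 12 := by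
  have main : ∀ n : ℕ, 1 ≤ n →
      (∑ k ∈ Finset.range n, ((k:ℝ) + 1) ^ (-(12/11) : ℝ)) ≤
        12 - 11 * ((n:ℝ)) ^ (-(1/11) : ℝ) := by
    intro n hn
    induction n with
    | zero => omega
    | succ m ih =>
      rcases Nat.eq_zero_or_pos m with rfl | hm
      · norm_num [Real.one_rpow, Real.rpow_neg]
      · rw [Finset.sum_range_succ]
        have hstep := zeta_step hm
        have := ih hm
        push_cast
        push_cast at hstep this
        linarith
  intro n
  rcases Nat.eq_zero_or_pos n with rfl | hn
  · simp
  · have h := main n hn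
    have h2 : 0 ≤ ((n:ℝ)) ^ (-(1/11) : ℝ) := Real.rpow_nonneg (Nat.cast_nonneg n) _
    linarith

end AuxLemmas

/-- The PRoA termination condition at time `m`. -/
def proaCond {Ω : Type*} (Z : ℕ → Ω → ℝ) (δ τ : ℝ) (m : ℕ) (ω : Ω) : Prop :=
  0 ≤ empMean Z m ω + τ - adaptiveEps δ m - 1 ∨
    empMean Z m ω + τ + adaptiveEps δ m - 1 < 0


set_option maxHeartbeats 3200000 in
/-- **Overall correctness of PRoA.** Let `J` be the first time `n ≥ 1` at which one of the two
PRoA termination conditions holds (`J = ∞` if none ever does). Then `J` is a stopping time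
for the natural filtration of `(Z_i)`, it is almost surely finite, and the probability that
the decision taken at time `J` is wrong is at most `δ`. -/
theorem proa_overall_correctness
    {Ω : Type*} [MeasurableSpace Ω] (P : Measure Ω) [IsProbabilityMeasure P]
    (Z : ℕ → Ω → ℝ) (hmeas : ∀ i, StronglyMeasurable (Z i))
    (hindep : iIndepFun Z P)
    (hident : ∀ i, IdentDistrib (Z i) (Z 0) P P)
    (hval : ∀ i ω, Z i ω = 0 ∨ Z i ω = 1)
    (μ : ℝ) (hμ : μ = ∫ ω, Z 0 ω ∂P)
    (δ τ : ℝ) (hδ : δ ∈ Set.Ioc (0 : ℝ) 1) (hτ : τ ∈ Set.Icc (0 : ℝ) 1)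
    (hne : μ ≠ 1 - τ)
    (J : Ω → ℕ∞)
    (hJ : ∀ ω, J ω = sInf {n : ℕ∞ | ∃ m : ℕ, (m : ℕ∞) = n ∧ 1 ≤ m ∧
      (0 ≤ empMean Z m ω + τ - adaptiveEps δ m - 1 ∨
        empMean Z m ω + τ + adaptiveEps δ m - 1 < 0)}) :
    (∀ n : ℕ, MeasurableSet[(Filtration.natural Z hmeas) n]
        {ω | J ω ≤ ((n + 1 : ℕ) : ℕ∞)}) ∧
      P {ω | J ω ≠ ⊤} = 1 ∧
      P {ω | (0 ≤ empMean Z (J ω).toNat ω + τ - adaptiveEps δ (J ω).toNat - 1 ∧ μ < 1 - τ) ∨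
          (empMean Z (J ω).toNat ω + τ + adaptiveEps δ (J ω).toNat - 1 < 0 ∧ 1 - τ ≤ μ)} ≤
        ENNReal.ofReal δ := by
  obtain ⟨hδ0, hδ1⟩ := hδ
  obtain ⟨hτ0, hτ1⟩ := hτ
  obtain ⟨hμ0, hμ1⟩ := hμ ▸ bernoulli_mean_mem P (hmeas 0) (hval 0)
  have hJ' : ∀ ω, J ω = sInf {n : ℕ∞ | ∃ m : ℕ, (m : ℕ∞) = n ∧ 1 ≤ m ∧
      proaCond Z δ τ m ω} := hJ
  clear hJ
  set 𝒢 := Filtration.natural Z hmeas with h𝒢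
  -- characterization of events involving J
  have hJle : ∀ ω (N : ℕ), (J ω ≤ (N : ℕ∞) ↔ ∃ m, 1 ≤ m ∧ m ≤ N ∧ proaCond Z δ τ m ω) := by
    intro ω N
    constructor
    · intro h
      by_contra hc
      push_neg at hc
      have hlow : ((N + 1 : ℕ) : ℕ∞) ≤ J ω := by
        rw [hJ' ω]
        refine le_sInf ?_
        rintro b ⟨m, rfl, hm1, hmc⟩
        have : N + 1 ≤ m := by
          by_contra hmN
          exact hc m hm1 (by omega) hmc
        exact_mod_cast this
      have := le_trans hlow h
      have : N + 1 ≤ N := by exact_mod_cast this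
      omega
    · rintro ⟨m, hm1, hmN, hmc⟩
      rw [hJ' ω]
      refine le_trans (sInf_le ⟨m, rfl, hm1, hmc⟩) ?_
      exact_mod_cast hmN
  have hJtop : ∀ ω, (J ω ≠ ⊤ ↔ ∃ m, 1 ≤ m ∧ proaCond Z δ τ m ω) := by
    intro ω
    constructor
    · intro h
      by_contra hc
      push_neg at hc
      apply h
      rw [hJ' ω, sInf_eq_top]
      rintro b ⟨m, rfl, hm1, hmc⟩
      exact absurd hmc (hc m hm1)
    · rintro ⟨m, hm1, hmc⟩
      rw [hJ' ω]
      refine ne_top_of_le_ne_top (WithTop.coe_ne_top (a := (m : ℕ)))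
        (sInf_le ⟨m, rfl, hm1, hmc⟩)
  -- measurability of the conditions
  have hemp_meas : ∀ (n m : ℕ), m ≤ n + 1 →
      Measurable[𝒢 n] (fun ω => empMean Z m ω) := by
    intro n m hm
    have hsum : StronglyMeasurable[𝒢 n] (fun ω => ∑ i ∈ Finset.range m, Z i ω) := by
      apply Finset.stronglyMeasurable_fun_sum
      intro i hi
      have hin : i ≤ n := by
        have := Finset.mem_range.1 hi
        omega
      exact (MeasureTheory.Filtration.stronglyAdapted_natural hmeas i).mono (𝒢.mono hin)
    exact (hsum.measurable).div_const _
  have hcond_meas : ∀ (n m : ℕ), m ≤ n + 1 →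
      MeasurableSet[𝒢 n] {ω | proaCond Z δ τ m ω} := by
    intro n m hm
    have h1 : Measurable[𝒢 n] (fun ω => empMean Z m ω + τ - adaptiveEps δ m - 1) :=
      (((hemp_meas n m hm).add_const τ).sub_const (adaptiveEps δ m)).sub_const 1
    have h2 : Measurable[𝒢 n] (fun ω => empMean Z m ω + τ + adaptiveEps δ m - 1) :=
      (((hemp_meas n m hm).add_const τ).add_const (adaptiveEps δ m)).sub_const 1
    exact (measurableSet_le measurable_const h1).union (measurableSet_lt h2 measurable_const)
  -- Part 1 : stopping time
  have part1 : ∀ n : ℕ, MeasurableSet[𝒢 n] {ω | J ω ≤ ((n + 1 : ℕ) : ℕ∞)} := by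
    intro n
    have hset : {ω | J ω ≤ ((n + 1 : ℕ) : ℕ∞)} =
        ⋃ m ∈ Finset.Icc 1 (n + 1), {ω | proaCond Z δ τ m ω} := by
      ext ω
      simp only [Set.mem_setOf_eq, Set.mem_iUnion, Finset.mem_Icc, exists_prop]
      rw [hJle ω (n + 1)]
      constructor
      · rintro ⟨m, h1, h2, h3⟩; exact ⟨m, ⟨h1, h2⟩, h3⟩
      · rintro ⟨m, ⟨h1, h2⟩, h3⟩; exact ⟨m, h1, h2, h3⟩
    rw [hset]
    refine MeasurableSet.biUnion (Finset.Icc 1 (n + 1)).countable_toSet ?_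
    intro m hm
    exact hcond_meas n m (Finset.mem_Icc.1 hm).2
  -- basic constants
  set c : ℝ := 1 / 1.8 * Real.log (24 / δ) with hc_def
  have h24δ : (1:ℝ) < 24 / δ := by
    rw [lt_div_iff₀ hδ0]; linarith
  have hc : 0 < c := by
    apply mul_pos (by norm_num) (Real.log_pos h24δ)
  set L : ℝ := Real.log 1.1 with hL_def
  have hL : 0 < L := Real.log_pos (by norm_num)
  have hZint : Integrable (Z 0) P := bernoulli_integrable P (hmeas 0) (hval 0)
  -- eps formula
  have hW_eq : ∀ n : ℕ, adaptiveEps δ n =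
      Real.sqrt ((0.6 * Real.log (Real.log n / L + 1) + c) / n) := by
    intro n; rw [adaptiveEps, hc_def, hL_def]
  have hW_nonneg : ∀ n : ℕ, 0 ≤ 0.6 * Real.log (Real.log (n:ℕ) / L + 1) + c := by
    intro n
    rcases Nat.eq_zero_or_pos n with rfl | hn
    · simp only [Nat.cast_zero, Real.log_zero, zero_div, zero_add, Real.log_one, mul_zero]
      linarith
    · have h1 : (0:ℝ) ≤ Real.log n := Real.log_nonneg (by exact_mod_cast hn)
      have h2 : 0 ≤ Real.log (Real.log n / L + 1) := by
        apply Real.log_nonneg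
        have : 0 ≤ Real.log n / L := by positivity
        linarith
      nlinarith
  have hε_nonneg : ∀ n : ℕ, 0 ≤ adaptiveEps δ n := fun n => Real.sqrt_nonneg _
  -- Part 2: almost sure finiteness
  have hslln := strong_law_ae_real Z hZint
    (fun i j hij => hindep.indepFun hij) hident
  have hεlim : Filter.Tendsto (fun n : ℕ => adaptiveEps δ n) Filter.atTop (nhds 0) := by
    have hle : ∀ n : ℕ, 1 ≤ n → adaptiveEps δ n ≤
        Real.sqrt ((0.6 / L) * (Real.log n / n) + c / n) := by
      intro n hn
      rw [hW_eq n]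
      apply Real.sqrt_le_sqrt
      have hn0 : (0:ℝ) < n := by exact_mod_cast hn
      have hlog0 : (0:ℝ) ≤ Real.log n := Real.log_nonneg (by exact_mod_cast hn)
      have hlog : Real.log (Real.log n / L + 1) ≤ Real.log n / L := by
        have := Real.log_le_sub_one_of_pos
          (show (0:ℝ) < Real.log n / L + 1 by positivity)
        linarith
      have hnum : 0.6 * Real.log (Real.log n / L + 1) + c ≤ 0.6 * (Real.log n / L) + c := by
        nlinarith
      calc (0.6 * Real.log (Real.log n / L + 1) + c) / n
          ≤ (0.6 * (Real.log n / L) + c) / n := by gcongr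
        _ = (0.6 / L) * (Real.log n / n) + c / n := by ring
    have hlim2 : Filter.Tendsto (fun n : ℕ => (0.6 / L) * (Real.log n / n) + c / n)
        Filter.atTop (nhds 0) := by
      have ha : Filter.Tendsto (fun n : ℕ => Real.log n / n) Filter.atTop (nhds 0) :=
        (Real.isLittleO_log_id_atTop.tendsto_div_nhds_zero).comp
          tendsto_natCast_atTop_atTop
      have := (ha.const_mul (0.6 / L)).add (tendsto_const_div_atTop_nhds_zero_nat c)
      simpa using this
    have hlim3 : Filter.Tendsto (fun n : ℕ =>
        Real.sqrt ((0.6 / L) * (Real.log n / n) + c / n)) Filter.atTop (nhds 0) := by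
      have := (Real.continuous_sqrt.tendsto 0).comp hlim2
      rwa [Real.sqrt_zero] at this
    refine squeeze_zero' (Filter.Eventually.of_forall hε_nonneg) ?_ hlim3
    filter_upwards [Filter.eventually_ge_atTop 1] with n hn
    exact hle n hn
  have hae : ∀ᵐ ω ∂P, J ω ≠ ⊤ := by
    filter_upwards [hslln] with ω hω
    rw [hJtop ω]
    rw [← hμ] at hω
    set d : ℝ := |μ - (1 - τ)| with hd_def
    have hd : 0 < d := abs_pos.2 (sub_ne_zero.2 hne)
    obtain ⟨N₁, hN₁⟩ := Metric.tendsto_atTop.1 hω (d / 2) (by positivity)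
    obtain ⟨N₂, hN₂⟩ := Metric.tendsto_atTop.1 hεlim (d / 2) (by positivity)
    set n := max (max N₁ N₂) 1 with hn_def
    have hn1 : 1 ≤ n := le_max_right _ _
    have h1 := hN₁ n (le_trans (le_max_left _ _) (le_max_left _ _))
    have h2 := hN₂ n (le_trans (le_max_right _ _) (le_max_left _ _))
    rw [Real.dist_eq] at h1 h2
    have hemp : |empMean Z n ω - μ| < d / 2 := h1
    have hεn : adaptiveEps δ n < d / 2 := by
      have := abs_lt.1 h2
      linarith [this.2]
    refine ⟨n, hn1, ?_⟩
    have habs := abs_lt.1 hemp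
    rcases lt_or_gt_of_ne hne with hlt | hgt
    · right
      have hdle : d = 1 - τ - μ := by
        rw [hd_def, abs_of_neg (by linarith)]; ring
      have := habs.2
      linarith
    · left
      have hdle : d = μ - (1 - τ) := by
        rw [hd_def, abs_of_pos (by linarith)]
      have := habs.1
      linarith
  have hJtop_meas : MeasurableSet {ω | J ω ≠ ⊤} := by
    have hset : {ω | J ω ≠ ⊤} = ⋃ m : ℕ, ⋃ (_ : 1 ≤ m), {ω | proaCond Z δ τ m ω} := by
      ext ω
      simp only [Set.mem_setOf_eq, Set.mem_iUnion, exists_prop]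
      exact hJtop ω
    rw [hset]
    refine MeasurableSet.iUnion fun m => MeasurableSet.iUnion fun _ => ?_
    exact ((Filtration.natural Z hmeas).le m) _ (hcond_meas m m (by omega))
  have hPtop : P {ω | J ω = ⊤} = 0 := by
    have := ae_iff.1 hae
    simpa using this
  have part2 : P {ω | J ω ≠ ⊤} = 1 := by
    have hcompl : {ω | J ω ≠ ⊤}ᶜ = {ω | J ω = ⊤} := by
      ext ω; simp
    have h1 := measure_compl hJtop_meas (measure_ne_top P _)
    rw [hcompl, hPtop, measure_univ] at h1
    have h2 : P {ω | J ω ≠ ⊤} ≤ 1 := prob_le_one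
    have := tsub_eq_zero_iff_le.1 h1.symm
    exact le_antisymm h2 this
  refine ⟨part1, part2, ?_⟩
  -- Part 3: correctness of the decision
  have hdev : ∀ (ω : Ω) (n : ℕ), 1 ≤ n →
      ((0 ≤ empMean Z n ω + τ - adaptiveEps δ n - 1 ∧ μ < 1 - τ) ∨
        (empMean Z n ω + τ + adaptiveEps δ n - 1 < 0 ∧ 1 - τ ≤ μ)) →
      adaptiveEps δ n < |empMean Z n ω - μ| := by
    rintro ω n hn (⟨h1, h2⟩ | ⟨h1, h2⟩)
    · have h3 : adaptiveEps δ n < empMean Z n ω - μ := by linarith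
      exact lt_of_lt_of_le h3 (le_abs_self _)
    · have h2' : 1 - τ < μ := lt_of_le_of_ne h2 (fun h => hne h.symm)
      have h3 : adaptiveEps δ n < μ - empMean Z n ω := by linarith
      calc adaptiveEps δ n < μ - empMean Z n ω := h3
        _ ≤ |empMean Z n ω - μ| := by rw [abs_sub_comm]; exact le_abs_self _
  set tt : ℕ → ℝ := fun k => Real.sqrt ((1.1:ℝ)^k * (0.6 * Real.log ((k:ℝ)+1) + c))
    with htt_def
  set M : ℕ → ℕ := fun k => ⌊(1.1:ℝ)^(k+1)⌋₊ with hM_def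
  have hA_pos : ∀ k : ℕ, (0:ℝ) < 0.6 * Real.log ((k:ℝ)+1) + c := by
    intro k
    have h0 : (0:ℝ) ≤ (k:ℝ) := Nat.cast_nonneg k
    have h1 : (0:ℝ) ≤ Real.log ((k:ℝ)+1) := Real.log_nonneg (by linarith)
    nlinarith
  have htt_pos : ∀ k, 0 < tt k := fun k =>
    Real.sqrt_pos.2 (mul_pos (pow_pos (by norm_num) k) (hA_pos k))
  have hM1 : ∀ k, 1 ≤ M k := by
    intro k
    apply Nat.le_floor
    have : (1:ℝ) ≤ (1.1:ℝ)^(k+1) := one_le_pow₀ (by norm_num)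
    exact_mod_cast this
  have hMle : ∀ k, (M k : ℝ) ≤ (1.1:ℝ)^(k+1) := fun k => Nat.floor_le (by positivity)
  set U : ℕ → Set Ω := fun k =>
    {ω | ∃ n, 1 ≤ n ∧ n ≤ M k ∧ tt k ≤ (∑ i ∈ Finset.range n, Z i ω) - n * μ} with hU_def
  set V : ℕ → Set Ω := fun k =>
    {ω | ∃ n, 1 ≤ n ∧ n ≤ M k ∧
      tt k ≤ (∑ i ∈ Finset.range n, (1 - Z i ω)) - n * (1 - μ)} with hV_def
  -- epoch covering
  have hcover : ∀ (ω : Ω) (n : ℕ), 1 ≤ n → adaptiveEps δ n < |empMean Z n ω - μ| →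
      ω ∈ ⋃ k, (U k ∪ V k) := by
    intro ω n hn hdev'
    have hn0 : (0:ℝ) < n := by exact_mod_cast hn
    have hlogn : (0:ℝ) ≤ Real.log n := Real.log_nonneg (by exact_mod_cast hn)
    set k := ⌊Real.log n / L⌋₊ with hk_def
    have hk1 : (k:ℝ) ≤ Real.log n / L := Nat.floor_le (div_nonneg hlogn hL.le)
    have hk2 : Real.log n / L < (k:ℝ) + 1 := Nat.lt_floor_add_one _
    have hnM : n ≤ M k := by
      apply Nat.le_floor
      have h1 : Real.log n < ((k:ℝ)+1) * L := by
        have := (div_lt_iff₀ hL).1 hk2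
        linarith
      have h2 : Real.log n < Real.log ((1.1:ℝ)^(k+1)) := by
        rw [Real.log_pow, ← hL_def]; push_cast; linarith
      have h3 := (Real.log_lt_log_iff hn0 (pow_pos (by norm_num) (k+1))).1 h2
      exact h3.le
    have hkn : (1.1:ℝ)^k ≤ n := by
      have h1 : Real.log ((1.1:ℝ)^k) ≤ Real.log n := by
        rw [Real.log_pow, ← hL_def]
        have : (k:ℝ) * L ≤ Real.log n := by
          have := (le_div_iff₀ hL).1 hk1
          linarith
        linarith
      exact (Real.log_le_log_iff (pow_pos (by norm_num) k) hn0).1 h1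
    have hklog : Real.log ((k:ℝ)+1) ≤ Real.log (Real.log n / L + 1) := by
      rw [Real.log_le_log_iff (by positivity) (by positivity)]
      linarith
    have htn : tt k ≤ (n:ℝ) * adaptiveEps δ n := by
      rw [hW_eq n]
      have heq : (n:ℝ) * Real.sqrt ((0.6 * Real.log (Real.log n / L + 1) + c) / n)
          = Real.sqrt ((n:ℝ) * (0.6 * Real.log (Real.log n / L + 1) + c)) := by
        rw [show (n:ℝ) * (0.6 * Real.log (Real.log n / L + 1) + c)
            = (n:ℝ)^2 * ((0.6 * Real.log (Real.log n / L + 1) + c) / n) by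
          field_simp]
        rw [Real.sqrt_mul (sq_nonneg _), Real.sqrt_sq hn0.le]
      rw [heq]
      simp only [htt_def]
      apply Real.sqrt_le_sqrt
      have hWn := hW_nonneg n
      have hklog6 : 0.6 * Real.log ((k:ℝ)+1) + c ≤
          0.6 * Real.log (Real.log n / L + 1) + c := by nlinarith
      exact mul_le_mul hkn hklog6 (hA_pos k).le hn0.le
    have hS : (∑ i ∈ Finset.range n, Z i ω) - n * μ = n * (empMean Z n ω - μ) := by
      rw [empMean]; field_simp
    have habs : tt k < |(∑ i ∈ Finset.range n, Z i ω) - n * μ| := by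
      rw [hS, abs_mul, abs_of_pos hn0]
      calc tt k ≤ (n:ℝ) * adaptiveEps δ n := htn
        _ < n * |empMean Z n ω - μ| := mul_lt_mul_of_pos_left hdev' hn0
    refine Set.mem_iUnion.2 ⟨k, ?_⟩
    rcases le_or_gt 0 ((∑ i ∈ Finset.range n, Z i ω) - n * μ) with hpos | hneg
    · left
      rw [abs_of_nonneg hpos] at habs
      exact ⟨n, hn, hnM, habs.le⟩
    · right
      refine ⟨n, hn, hnM, ?_⟩
      have h1 : (∑ i ∈ Finset.range n, (1 - Z i ω)) - n * (1 - μ)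
          = -((∑ i ∈ Finset.range n, Z i ω) - n * μ) := by
        rw [Finset.sum_sub_distrib, Finset.sum_const, Finset.card_range]
        push_cast; ring
      rw [h1]
      rw [abs_of_neg hneg] at habs
      linarith
  -- inclusion of the bad event
  have hincl : {ω | (0 ≤ empMean Z (J ω).toNat ω + τ - adaptiveEps δ (J ω).toNat - 1 ∧
        μ < 1 - τ) ∨
      (empMean Z (J ω).toNat ω + τ + adaptiveEps δ (J ω).toNat - 1 < 0 ∧ 1 - τ ≤ μ)} ⊆
      {ω | J ω = ⊤} ∪ ⋃ k, (U k ∪ V k) := by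
    intro ω hω
    by_cases htop : J ω = ⊤
    · exact Or.inl htop
    · right
      have h1J : (1:ℕ∞) ≤ J ω := by
        rw [hJ' ω]
        refine le_sInf ?_
        rintro b ⟨m, rfl, hm1, hmc⟩
        exact_mod_cast hm1
      have hn1 : 1 ≤ (J ω).toNat := by
        rw [← ENat.coe_toNat_eq_self.2 htop] at h1J
        exact_mod_cast h1J
      exact hcover ω (J ω).toNat hn1 (hdev ω (J ω).toNat hn1 hω)
  -- exponential bound massage
  have hexp_mono : ∀ k : ℕ, (-2 * (tt k)^2 / (M k) : ℝ) ≤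
      -(2/1.1) * (0.6 * Real.log ((k:ℝ)+1) + c) := by
    intro k
    have ht2 : (tt k)^2 = (1.1:ℝ)^k * (0.6 * Real.log ((k:ℝ)+1) + c) :=
      Real.sq_sqrt (mul_nonneg (pow_nonneg (by norm_num) k) (hA_pos k).le)
    have hMpos : (0:ℝ) < M k := by exact_mod_cast hM1 k
    have hpowpos : (0:ℝ) < (1.1:ℝ)^(k+1) := pow_pos (by norm_num) _
    have hstep : (2/1.1) * (0.6 * Real.log ((k:ℝ)+1) + c) ≤ 2 * (tt k)^2 / M k := by
      rw [ht2]
      have h1 : 2 * ((1.1:ℝ)^k * (0.6 * Real.log ((k:ℝ)+1) + c)) / (1.1:ℝ)^(k+1) ≤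
          2 * ((1.1:ℝ)^k * (0.6 * Real.log ((k:ℝ)+1) + c)) / M k :=
        div_le_div_of_nonneg_left
          (mul_nonneg (by norm_num) (mul_nonneg (pow_nonneg (by norm_num) k)
            (hA_pos k).le)) hMpos (hMle k)
      refine le_trans (le_of_eq ?_) h1
      rw [pow_succ]
      have hne0 : ((1.1:ℝ)^k) ≠ 0 := by positivity
      field_simp
    have h2 : -(2 * (tt k)^2 / M k) ≤ -((2/1.1) * (0.6 * Real.log ((k:ℝ)+1) + c)) :=
      neg_le_neg hstep
    have h3 : -2 * (tt k)^2 / (M k) = -(2 * (tt k)^2 / M k) := by ring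
    linarith
  have hUk : ∀ k, P (U k) ≤ ENNReal.ofReal
      (Real.exp (-(2/1.1) * (0.6 * Real.log ((k:ℝ)+1) + c))) := by
    intro k
    refine le_trans (one_sided_maximal P Z hmeas hindep hident hval μ hμ (M k) (hM1 k)
      (tt k) (htt_pos k)) (ENNReal.ofReal_le_ofReal (Real.exp_le_exp.2 (hexp_mono k)))
  have hVk : ∀ k, P (V k) ≤ ENNReal.ofReal
      (Real.exp (-(2/1.1) * (0.6 * Real.log ((k:ℝ)+1) + c))) := by
    intro k
    have hmeas' : ∀ i, StronglyMeasurable ((fun i (ω : Ω) => 1 - Z i ω) i) :=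
      fun i => stronglyMeasurable_const.sub (hmeas i)
    have hindep' : iIndepFun (fun i (ω : Ω) => 1 - Z i ω) P :=
      hindep.comp (fun _ (x : ℝ) => 1 - x) (fun _ => measurable_const.sub measurable_id)
    have hident' : ∀ i, IdentDistrib ((fun i (ω : Ω) => 1 - Z i ω) i)
        ((fun i (ω : Ω) => 1 - Z i ω) 0) P P :=
      fun i => (hident i).comp (measurable_const.sub measurable_id)
    have hval' : ∀ i (ω : Ω), 1 - Z i ω = 0 ∨ 1 - Z i ω = 1 := fun i ω => by
      rcases hval i ω with h | h <;> simp [h]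
    have hμ' : (1 - μ) = ∫ ω, (1 - Z 0 ω) ∂P := by
      rw [integral_sub (integrable_const 1) hZint, integral_const, probReal_univ]
      simp [hμ]
    exact le_trans (one_sided_maximal P (fun i (ω : Ω) => 1 - Z i ω) hmeas' hindep' hident'
      hval' (1 - μ) hμ' (M k) (hM1 k) (tt k) (htt_pos k))
      (ENNReal.ofReal_le_ofReal (Real.exp_le_exp.2 (hexp_mono k)))
  -- assemble
  refine le_trans (measure_mono hincl) ?_
  refine le_trans (measure_union_le _ _) ?_
  rw [hPtop, zero_add]
  refine le_trans (measure_iUnion_le _) ?_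
  have hterm : ∀ k, P (U k ∪ V k) ≤ ENNReal.ofReal
      (2 * Real.exp (-(2/1.1) * (0.6 * Real.log ((k:ℝ)+1) + c))) := by
    intro k
    refine le_trans (measure_union_le _ _) (le_trans (add_le_add (hUk k) (hVk k)) ?_)
    rw [← ENNReal.ofReal_add (Real.exp_nonneg _) (Real.exp_nonneg _)]
    exact ENNReal.ofReal_le_ofReal (by linarith)
  refine le_trans (ENNReal.tsum_le_tsum hterm) ?_
  rw [ENNReal.tsum_eq_iSup_sum]
  refine iSup_le fun s => ?_
  refine le_trans (Finset.sum_le_sum_of_subset s.subset_range_sup_succ) ?_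
  rw [← ENNReal.ofReal_sum_of_nonneg (fun k _ => by positivity)]
  apply ENNReal.ofReal_le_ofReal
  calc ∑ k ∈ Finset.range (s.sup id).succ,
        2 * Real.exp (-(2/1.1) * (0.6 * Real.log ((k:ℝ)+1) + c))
      = ∑ k ∈ Finset.range (s.sup id).succ,
        (2 * Real.exp (-(20/11) * c)) * (((k:ℝ)+1) ^ (-(12/11):ℝ)) := by
        refine Finset.sum_congr rfl fun k _ => ?_
        rw [Real.rpow_def_of_pos (by positivity)]
        rw [show -(2/1.1) * (0.6 * Real.log ((k:ℝ)+1) + c)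
            = -(20/11) * c + Real.log ((k:ℝ)+1) * (-(12/11)) by norm_num; ring]
        rw [Real.exp_add]
        ring
    _ = (2 * Real.exp (-(20/11) * c)) *
        ∑ k ∈ Finset.range (s.sup id).succ, (((k:ℝ)+1) ^ (-(12/11):ℝ)) := by
        rw [Finset.mul_sum]
    _ ≤ (2 * Real.exp (-(20/11) * c)) * 12 :=
        mul_le_mul_of_nonneg_left (zeta_bound _) (by positivity)
    _ = 24 * Real.exp (-(20/11) * c) := by ring
    _ ≤ 24 * (δ / 24) := by
        have hlog : 0 ≤ Real.log (24/δ) := (Real.log_pos h24δ).le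
        have h1 : Real.exp (-(20/11) * c) ≤ Real.exp (-Real.log (24/δ)) := by
          apply Real.exp_le_exp.2
          rw [hc_def]
          nlinarith
        have h2 : Real.exp (-Real.log (24/δ)) = δ / 24 := by
          rw [Real.exp_neg, Real.exp_log (by positivity), inv_div]
        rw [h2] at h1
        linarith
    _ = δ := by ring
end
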